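/- arXiv:2109.11298 — 5 statements merged into one kernel-verified Lean document; each statement's English description precedes it below -/
import Mathlib

section
/- For $p = 1/2$, the sequence $\hat{a}_n = \Gamma(n)/\Gamma(n+1/2)$ satisfies $\lim_{n\to\infty} \frac{1}{\log n} \sum_{k=1}^n \hat{a}_k^2 = 1$. -/
/-!
Log-convexity of `Γ` at the midpoints `x + 1/2` of `[x, x + 1]` and `x + 1` of
`[x + 1/2, x + 3/2]` gives Gautschi-type bounds `1/k ≤ âₖ² ≤ 1/k + 1/(2k²)`. Hence
`∑ₖ (âₖ² - 1/k)` converges, so `∑_{k ≤ n} âₖ² - log n` converges (to `γ` plus that sum), which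
forces `∑_{k ≤ n} âₖ² / log n → 1`.
-/

open Filter Finset Real Topology

theorem Real.Gamma_add_div_two_sq_le {s t : ℝ} (hs : 0 < s) (ht : 0 < t) :
    Gamma ((s + t) / 2) ^ 2 ≤ Gamma s * Gamma t := by
  have h := Gamma_mul_add_mul_le_rpow_Gamma_mul_rpow_Gamma hs ht one_half_pos one_half_pos
    (add_halves 1)
  rw [← sqrt_eq_rpow, ← sqrt_eq_rpow, ← sqrt_mul (Gamma_pos_of_pos hs).le] at h
  calc Gamma ((s + t) / 2) ^ 2 = Gamma (1 / 2 * s + 1 / 2 * t) ^ 2 := by ring_nf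
    _ ≤ √(Gamma s * Gamma t) ^ 2 := by gcongr
    _ = Gamma s * Gamma t := sq_sqrt (by positivity [Gamma_pos_of_pos hs, Gamma_pos_of_pos ht])

theorem Real.inv_le_Gamma_div_Gamma_add_half_sq {x : ℝ} (hx : 0 < x) :
    x⁻¹ ≤ (Gamma x / Gamma (x + 1 / 2)) ^ 2 := by
  have h := Gamma_add_div_two_sq_le hx (by positivity : 0 < x + 1)
  rw [show (x + (x + 1)) / 2 = x + 1 / 2 by ring, Gamma_add_one hx.ne'] at h
  rw [div_pow, le_div_iff₀ (by positivity [Gamma_pos_of_pos (by positivity : 0 < x + 1 / 2)]),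
    inv_mul_le_iff₀ hx]
  nlinarith

theorem Real.Gamma_div_Gamma_add_half_sq_le {x : ℝ} (hx : 0 < x) :
    (Gamma x / Gamma (x + 1 / 2)) ^ 2 ≤ x⁻¹ + (2 * x ^ 2)⁻¹ := by
  have h := Gamma_add_div_two_sq_le (by positivity : 0 < x + 1 / 2)
    (by positivity : 0 < x + 1 / 2 + 1)
  rw [show (x + 1 / 2 + (x + 1 / 2 + 1)) / 2 = x + 1 by ring, Gamma_add_one hx.ne',
    Gamma_add_one (by positivity)] at h
  calc (Gamma x / Gamma (x + 1 / 2)) ^ 2 ≤ (x + 1 / 2) / x ^ 2 := by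
        rw [div_pow, div_le_div_iff₀ (by positivity [Gamma_pos_of_pos hx])
          (by positivity [Gamma_pos_of_pos (by positivity : 0 < x + 1 / 2)])]
        nlinarith
    _ = x⁻¹ + (2 * x ^ 2)⁻¹ := by field_simp

theorem Real.summable_Gamma_div_Gamma_add_half_sq_sub_inv :
    Summable fun k : ℕ =>
      (Gamma (k + 1) / Gamma (k + 1 + 1 / 2)) ^ 2 - ((k : ℝ) + 1)⁻¹ := by
  have hsq : Summable fun k : ℕ => (2 * ((k : ℝ) + 1) ^ 2)⁻¹ := by
    refine (((summable_nat_add_iff 1).mpr (summable_nat_pow_inv.mpr one_lt_two)).mul_left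
      2⁻¹).congr fun k => ?_
    push_cast
    rw [mul_inv]
  refine hsq.of_nonneg_of_le (fun k => ?_) (fun k => ?_)
  · exact sub_nonneg.mpr (inv_le_Gamma_div_Gamma_add_half_sq (by positivity))
  · exact sub_le_iff_le_add'.mpr (Gamma_div_Gamma_add_half_sq_le (by positivity))

theorem tendsto_sum_range_sub_log_of_summable {f : ℕ → ℝ}
    (hf : Summable fun k : ℕ => f k - ((k : ℝ) + 1)⁻¹) :
    Tendsto (fun n : ℕ => ∑ k ∈ range n, f k - log n) atTop
      (𝓝 (eulerMascheroniConstant + ∑' k : ℕ, (f k - ((k : ℝ) + 1)⁻¹))) := by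
  refine (tendsto_harmonic_sub_log.add hf.tendsto_sum_tsum_nat).congr fun n => ?_
  simp [harmonic, sum_sub_distrib]

theorem tendsto_one_div_mul_of_tendsto_sub {α : Type*} {l : Filter α} {u g : α → ℝ} {c : ℝ}
    (hu : Tendsto (fun x => u x - g x) l (𝓝 c)) (hg : Tendsto g l atTop) :
    Tendsto (fun x => 1 / g x * u x) l (𝓝 1) := by
  have h := (hu.mul hg.inv_tendsto_atTop).const_add 1
  rw [mul_zero, add_zero] at h
  refine h.congr' ?_
  filter_upwards [hg.eventually_ne_atTop 0] with x hx
  simp only [Pi.inv_apply]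
  field_simp
  ring

/-- for `p = 1/2`, with `âₙ = Γ(n)/Γ(n+1/2)`,
`(1/log n) ∑_{k=1}^n âₖ² → 1`. -/
theorem sum_sq_hata_critical_asymptotic :
    Tendsto
      (fun n : ℕ => (1 / Real.log n) *
        ∑ k ∈ Finset.Icc 1 n, (Real.Gamma k / Real.Gamma (k + 1 / 2)) ^ 2)
      atTop (nhds 1) := by
  convert tendsto_one_div_mul_of_tendsto_sub
    (tendsto_sum_range_sub_log_of_summable summable_Gamma_div_Gamma_add_half_sq_sub_inv)
    (tendsto_log_atTop.comp tendsto_natCast_atTop_atTop) using 3 with n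
  rw [← Ico_add_one_right_eq_Icc, sum_Ico_eq_sum_range]
  simp [add_comm]
end

section
/- Suppose $X$ is centred, bounded ($\|X\|_\infty < \infty$), and $p \in (0, 1/2)$. Then the positively step-reinforced random walk satisfies the strong law of large numbers $\lim_{n\to\infty} \hat{S}_n / n^{1-p} = 0$ almost surely. -/
/-!
With `a_n = ∏_{1 ≤ k < n} k / (k + p)`, which is of order `n^{-p}`, the process `M_n = a_n Ŝ_n`
has martingale increments from time `1` on, and they are bounded by `(1 + p) C a_{n+1}`. So the
martingale `∑_k (M_{k+1} - M_k) / k^{1-2p}` has increments whose second moments are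
`O(k^{2p-2})`, summable because `p < 1/2`; being bounded in `L²` it converges almost surely.
Kronecker's lemma then gives `M_n = o(n^{1-2p})`, that is `Ŝ_n = o(n^{1-p})`.
-/

open MeasureTheory ProbabilityTheory Filter Finset Asymptotics
open scoped Topology ENNReal

theorem sum_range_mul_sub_by_parts {b u : ℕ → ℝ} (L : ℝ) (n : ℕ) :
    ∑ k ∈ range n, b k * (u (k + 1) - u k) =
      b n * (u n - L) - b 0 * (u 0 - L) - ∑ k ∈ range n, (b (k + 1) - b k) * (u (k + 1) - L) := by
  induction n with
  | zero => simp
  | succ n ih => rw [sum_range_succ, sum_range_succ, ih]; ring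

theorem Filter.Tendsto.kronecker {u b : ℕ → ℝ} {L : ℝ} (hu : Tendsto u atTop (𝓝 L))
    (hb : Monotone b) (hb_top : Tendsto b atTop atTop) :
    Tendsto (fun n ↦ (∑ k ∈ range n, b k * (u (k + 1) - u k)) / b n) atTop (𝓝 0) := by
  have hu' : (fun n ↦ u n - L) =o[atTop] fun _ ↦ (1 : ℝ) :=
    (isLittleO_one_iff ℝ).2 (tendsto_sub_nhds_zero_iff.2 hu)
  have hb_norm : Tendsto (fun n ↦ ‖b n‖) atTop atTop := tendsto_norm_atTop_atTop.comp hb_top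
  have hlast : (fun n ↦ b n * (u n - L)) =o[atTop] b := by
    simpa using (isBigO_refl b atTop).mul_isLittleO hu'
  have hconst (c : ℝ) : (fun _ ↦ c) =o[atTop] b := isLittleO_const_left.2 (Or.inr hb_norm)
  have hincr :
      (fun k ↦ (b (k + 1) - b k) * (u (k + 1) - L)) =o[atTop] fun k ↦ b (k + 1) - b k := by
    simpa using (isBigO_refl (fun k ↦ b (k + 1) - b k) atTop).mul_isLittleO
      (hu'.comp_tendsto (tendsto_add_atTop_nat 1))
  have hsum := hincr.sum_range (fun k ↦ sub_nonneg.2 (hb k.le_succ))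
    ((tendsto_atTop_add_const_right _ (-b 0) hb_top).congr fun n ↦ by rw [sum_range_sub]; ring)
  simp only [sum_range_sub] at hsum
  have hsum' := hsum.trans_isBigO ((isBigO_refl b atTop).sub (hconst (b 0)).isBigO)
  refine ((hlast.sub (hconst (b 0 * (u 0 - L)))).sub hsum').tendsto_div_nhds_zero.congr
    fun n ↦ by simp [sum_range_mul_sub_by_parts L]

section MartingaleDifferences

variable {Ω : Type*} {m0 : MeasurableSpace Ω} {μ : Measure Ω} [IsFiniteMeasure μ]
  {ℱ : Filtration ℕ m0} {D : ℕ → Ω → ℝ}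

theorem integral_mul_eq_zero_of_condExp_eq_zero {m : MeasurableSpace Ω} (hm : m ≤ m0)
    {g d : Ω → ℝ} (hg : StronglyMeasurable[m] g) (hgd : Integrable (g * d) μ)
    (hd : Integrable d μ) (hd0 : μ[d | m] =ᵐ[μ] 0) : ∫ ω, g ω * d ω ∂μ = 0 := by
  calc ∫ ω, g ω * d ω ∂μ = ∫ ω, (μ[g * d | m]) ω ∂μ := (integral_condExp hm).symm
    _ = ∫ ω, g ω * (μ[d | m]) ω ∂μ :=
      integral_congr_ae (condExp_mul_of_stronglyMeasurable_left hg hgd hd)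
    _ = 0 := by
      rw [integral_congr_ae (hd0.mono fun ω hω ↦ by simp [hω] : _ =ᵐ[μ] fun _ ↦ (0 : ℝ))]
      simp

theorem stronglyAdapted_sum_range (hD : ∀ k, StronglyMeasurable[ℱ (k + 1)] (D k)) :
    StronglyAdapted ℱ fun n ↦ ∑ k ∈ range n, D k :=
  fun _ ↦ Finset.stronglyMeasurable_sum _ fun k hk ↦
    (hD k).mono (ℱ.mono (Nat.succ_le_of_lt (mem_range.1 hk)))

theorem martingale_sum_range (hD : ∀ k, StronglyMeasurable[ℱ (k + 1)] (D k))
    (hint : ∀ k, Integrable (D k) μ) (hD0 : ∀ k, μ[D k | ℱ k] =ᵐ[μ] 0) :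
    Martingale (fun n ↦ ∑ k ∈ range n, D k) ℱ μ :=
  martingale_of_condExp_sub_eq_zero_nat (stronglyAdapted_sum_range hD)
    (fun _ ↦ integrable_finsetSum' _ fun k _ ↦ hint k)
    fun n ↦ by simpa only [sum_range_succ_sub_sum] using hD0 n

theorem integral_sq_sum_range (hD : ∀ k, StronglyMeasurable[ℱ (k + 1)] (D k))
    (hL2 : ∀ k, MemLp (D k) 2 μ) (hD0 : ∀ k, μ[D k | ℱ k] =ᵐ[μ] 0) (n : ℕ) :
    ∫ ω, (∑ k ∈ range n, D k ω) ^ 2 ∂μ = ∑ k ∈ range n, ∫ ω, D k ω ^ 2 ∂μ := by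
  induction n with
  | zero => simp
  | succ n ih =>
    have hS : MemLp (∑ k ∈ range n, D k) 2 μ := memLp_finsetSum' _ fun k _ ↦ hL2 k
    have hcross : ∫ ω, (∑ k ∈ range n, D k) ω * D n ω ∂μ = 0 :=
      integral_mul_eq_zero_of_condExp_eq_zero (ℱ.le n) (stronglyAdapted_sum_range hD n)
        (hS.integrable_mul (hL2 n)) ((hL2 n).integrable one_le_two) (hD0 n)
    simp only [Finset.sum_apply] at hcross
    have hSD : Integrable (fun ω ↦ 2 * (∑ k ∈ range n, D k ω) * D n ω) μ := by
      simpa [mul_assoc] using (hS.integrable_mul (hL2 n)).const_mul 2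
    have hS2 : Integrable (fun ω ↦ (∑ k ∈ range n, D k ω) ^ 2) μ := by
      simpa using hS.integrable_sq
    simp only [sum_range_succ, add_sq]
    rw [integral_add (f := fun ω ↦ _ + _) (hS2.add hSD) (hL2 n).integrable_sq,
      integral_add hS2 hSD, ih]
    simp [mul_assoc, integral_const_mul, hcross]

theorem exists_ae_tendsto_sum_range (hD : ∀ k, StronglyMeasurable[ℱ (k + 1)] (D k))
    (hL2 : ∀ k, MemLp (D k) 2 μ) (hD0 : ∀ k, μ[D k | ℱ k] =ᵐ[μ] 0)
    (hsum : Summable fun k ↦ ∫ ω, D k ω ^ 2 ∂μ) :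
    ∀ᵐ ω ∂μ, ∃ c, Tendsto (fun n ↦ ∑ k ∈ range n, D k ω) atTop (𝓝 c) := by
  have hf := martingale_sum_range hD (fun k ↦ (hL2 k).integrable one_le_two) hD0
  set R := (μ.real Set.univ + ∑' k, ∫ ω, D k ω ^ 2 ∂μ) / 2
  simp only [← Finset.sum_apply]
  refine hf.submartingale.exists_ae_tendsto_of_bdd (R := R.toNNReal) fun n ↦ ?_
  have hS : MemLp (∑ k ∈ range n, D k) 2 μ := memLp_finsetSum' _ fun k _ ↦ hL2 k
  rw [eLpNorm_one_eq_lintegral_enorm,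
    ← ofReal_integral_norm_eq_lintegral_enorm (hS.integrable one_le_two)]
  refine ENNReal.ofReal_le_ofReal ?_
  calc ∫ ω, ‖(∑ k ∈ range n, D k) ω‖ ∂μ
      ≤ ∫ ω, (1 + (∑ k ∈ range n, D k) ω ^ 2) / 2 ∂μ := by
        refine integral_mono (hS.integrable one_le_two).norm
          (((integrable_const 1).add hS.integrable_sq).div_const 2) fun ω ↦ ?_
        have := sq_nonneg (|(∑ k ∈ range n, D k) ω| - 1)
        nlinarith [sq_abs ((∑ k ∈ range n, D k) ω), Real.norm_eq_abs ((∑ k ∈ range n, D k) ω)]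
    _ = (μ.real Set.univ + ∑ k ∈ range n, ∫ ω, D k ω ^ 2 ∂μ) / 2 := by
        rw [integral_div, integral_add (integrable_const 1) hS.integrable_sq]
        simp [Finset.sum_apply, integral_sq_sum_range hD hL2 hD0]
    _ ≤ R := by
        simp only [R]
        gcongr
        exact hsum.sum_le_tsum _ fun k _ ↦ integral_nonneg fun ω ↦ sq_nonneg _

end MartingaleDifferences

theorem rpow_add_one_mul_le {x p : ℝ} (hx : 0 < x) (hp0 : 0 ≤ p) (hp1 : p ≤ 1) :
    (x + 1) ^ p * x ≤ x ^ p * (x + p) := by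
  have hB := rpow_one_add_le_one_add_mul_self (s := x⁻¹) (by linarith [inv_pos.2 hx]) hp0 hp1
  have hsplit : (x + 1) ^ p = x ^ p * (1 + x⁻¹) ^ p := by
    rw [← Real.mul_rpow hx.le (by positivity)]; field_simp
  rw [hsplit, mul_assoc]
  gcongr
  calc (1 + x⁻¹) ^ p * x ≤ (1 + p * x⁻¹) * x := by gcongr
    _ = x + p := by field_simp

theorem rpow_mul_add_one_add_le {x p : ℝ} (hx : 0 ≤ x) (hp0 : 0 ≤ p) (hp1 : p ≤ 1) :
    x ^ p * (x + 1 + p) ≤ (x + 1) ^ p * (x + 1) := by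
  have hx1 : 0 < x + 1 := by linarith
  have hinv : (x + 1)⁻¹ ≤ 1 := inv_le_one_of_one_le₀ (by linarith)
  have hB := rpow_one_add_le_one_add_mul_self (s := -(x + 1)⁻¹) (by linarith) hp0 hp1
  have hsplit : x ^ p = (x + 1) ^ p * (1 + -(x + 1)⁻¹) ^ p := by
    rw [← Real.mul_rpow hx1.le (by linarith)]
    field_simp; ring_nf
  rw [hsplit, mul_assoc]
  gcongr
  calc (1 + -(x + 1)⁻¹) ^ p * (x + 1 + p) ≤ (1 + p * -(x + 1)⁻¹) * (x + 1 + p) := by gcongr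
    _ = x + 1 - p ^ 2 / (x + 1) := by field_simp; ring
    _ ≤ x + 1 := by linarith [div_nonneg (sq_nonneg p) hx1.le]

/-- `stepWeight p n = Γ(1 + p) Γ(n) / Γ(n + p)`: the paper's `â_n` up to the factor `Γ(1 + p)`. -/
noncomputable def stepWeight (p : ℝ) (n : ℕ) : ℝ := ∏ k ∈ Ico 1 n, (k : ℝ) / (k + p)

theorem stepWeight_succ (p : ℝ) {n : ℕ} (hn : 1 ≤ n) :
    stepWeight p (n + 1) = stepWeight p n * (n / (n + p)) :=
  prod_Ico_succ_top hn _

theorem stepWeight_pos {p : ℝ} (hp : 0 ≤ p) (n : ℕ) : 0 < stepWeight p n :=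
  prod_pos fun k hk ↦ by
    have : (1 : ℝ) ≤ k := by exact_mod_cast (mem_Ico.1 hk).1
    exact div_pos (by linarith) (by linarith)

theorem stepWeight_antitone {p : ℝ} (hp : 0 ≤ p) : Antitone (stepWeight p) := by
  refine antitone_nat_of_succ_le fun n ↦ ?_
  rcases Nat.eq_zero_or_pos n with rfl | hn
  · simp [stepWeight]
  rw [stepWeight_succ p hn]
  exact mul_le_of_le_one_right (stepWeight_pos hp n).le
    (div_le_one_of_le₀ (by linarith) (by positivity))

theorem rpow_mul_stepWeight_le_one {p : ℝ} (hp0 : 0 ≤ p) (hp1 : p ≤ 1) (n : ℕ) :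
    (n : ℝ) ^ p * stepWeight p n ≤ 1 := by
  rcases Nat.eq_zero_or_pos n with rfl | hn
  · simpa [stepWeight] using Real.zero_rpow_le_one p
  have hanti : Antitone fun n : ℕ ↦ ((n + 1 : ℕ) : ℝ) ^ p * stepWeight p (n + 1) := by
    refine antitone_nat_of_succ_le fun n ↦ ?_
    set x : ℝ := ((n + 1 : ℕ) : ℝ)
    have hx : 0 < x := by positivity
    have hw := stepWeight_pos hp0 (n + 1)
    calc ((n + 1 + 1 : ℕ) : ℝ) ^ p * stepWeight p (n + 1 + 1)
        = stepWeight p (n + 1) * ((x + 1) ^ p * x / (x + p)) := by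
          rw [stepWeight_succ p (by omega)]; push_cast [x]; ring
      _ ≤ stepWeight p (n + 1) * x ^ p := by
          gcongr
          exact (div_le_iff₀ (by linarith)).2 (rpow_add_one_mul_le hx hp0 hp1)
      _ = x ^ p * stepWeight p (n + 1) := mul_comm _ _
  simpa [stepWeight, Nat.sub_add_cancel hn] using hanti (Nat.zero_le (n - 1))

theorem one_le_rpow_mul_stepWeight {p : ℝ} (hp0 : 0 ≤ p) (hp1 : p ≤ 1) {n : ℕ} (hn : 1 ≤ n) :
    1 ≤ (1 + p) * ((n : ℝ) ^ p * stepWeight p n) := by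
  have hmono : Monotone fun n : ℕ ↦ (n : ℝ) ^ p * stepWeight p (n + 1) := by
    refine monotone_nat_of_le_succ fun n ↦ ?_
    set x : ℝ := (n : ℝ)
    have hx : 0 ≤ x := by positivity
    have hw := stepWeight_pos hp0 (n + 1)
    calc x ^ p * stepWeight p (n + 1)
        = stepWeight p (n + 1) * (x ^ p * (x + 1 + p) / (x + 1 + p)) := by
          field_simp
      _ ≤ stepWeight p (n + 1) * ((x + 1) ^ p * (x + 1) / (x + 1 + p)) :=
          mul_le_mul_of_nonneg_left
            (div_le_div_of_nonneg_right (rpow_mul_add_one_add_le hx hp0 hp1) (by positivity)) hw.le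
      _ = ((n + 1 : ℕ) : ℝ) ^ p * stepWeight p (n + 1 + 1) := by
          rw [stepWeight_succ p (n := n + 1) (by omega)]; push_cast [x]; ring
  have ha2 : (1 + p) * stepWeight p 2 = 1 := by
    simp [stepWeight]; field_simp
  calc 1 = (1 + p) * ((1 : ℕ) ^ p * stepWeight p (1 + 1)) := by simpa using ha2.symm
    _ ≤ (1 + p) * ((n : ℝ) ^ p * stepWeight p (n + 1)) :=
        mul_le_mul_of_nonneg_left (hmono hn) (by linarith)
    _ ≤ (1 + p) * ((n : ℝ) ^ p * stepWeight p n) := by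
        gcongr; exact stepWeight_antitone hp0 n.le_succ

theorem tendsto_div_rpow_of_tendsto_stepWeight_mul {p : ℝ} (hp0 : 0 ≤ p) (hp : p < 1 / 2)
    {s : ℕ → ℝ}
    (h : Tendsto (fun n ↦ (stepWeight p n * s n - stepWeight p 1 * s 1) / (n : ℝ) ^ (1 - 2 * p))
      atTop (𝓝 0)) :
    Tendsto (fun n ↦ s n / (n : ℝ) ^ (1 - p)) atTop (𝓝 0) := by
  have hb : Tendsto (fun n : ℕ ↦ (n : ℝ) ^ (1 - 2 * p)) atTop atTop :=
    (tendsto_rpow_atTop (by linarith)).comp tendsto_natCast_atTop_atTop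
  have hM : Tendsto (fun n ↦ stepWeight p n * s n / (n : ℝ) ^ (1 - 2 * p)) atTop (𝓝 0) := by
    simpa using (h.add ((tendsto_const_nhds (x := stepWeight p 1 * s 1)).div_atTop hb)).congr
      fun n ↦ by ring
  have hbdd : IsBoundedUnder (· ≤ ·) atTop fun n : ℕ ↦ ‖((n : ℝ) ^ p * stepWeight p n)⁻¹‖ := by
    refine isBoundedUnder_of_eventually_le (a := 1 + p) ?_
    filter_upwards [eventually_ge_atTop 1] with n hn
    have : (0 : ℝ) < n := by exact_mod_cast hn
    have hw := stepWeight_pos hp0 n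
    rw [norm_inv, Real.norm_of_nonneg (by positivity),
      inv_le_iff_one_le_mul₀ (by positivity)]
    exact one_le_rpow_mul_stepWeight hp0 (by linarith) hn
  refine (hM.zero_mul_isBoundedUnder_le hbdd).congr' ?_
  filter_upwards [eventually_ge_atTop 1] with n hn
  have hn' : (0 : ℝ) < n := by exact_mod_cast hn
  have hw := stepWeight_pos hp0 n
  rw [show 1 - p = (1 - 2 * p) + p by ring, Real.rpow_add hn']
  field_simp

section ReinforcedWalk

variable {Ω : Type*} {m0 : MeasurableSpace Ω} {P : Measure Ω} {ℱ : Filtration ℕ m0}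
  {X : ℕ → Ω → ℝ} {p C : ℝ}

noncomputable def walk (X : ℕ → Ω → ℝ) (n : ℕ) (ω : Ω) : ℝ := ∑ j ∈ Icc 1 n, X j ω

theorem walk_succ (X : ℕ → Ω → ℝ) (n : ℕ) (ω : Ω) :
    walk X (n + 1) ω = walk X n ω + X (n + 1) ω :=
  sum_Icc_succ_top (by omega) _

theorem abs_walk_le (hX : ∀ n ω, |X n ω| ≤ C) (n : ℕ) (ω : Ω) : |walk X n ω| ≤ n * C :=
  calc |walk X n ω| ≤ ∑ j ∈ Icc 1 n, |X j ω| := abs_sum_le_sum_abs _ _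
    _ ≤ ∑ j ∈ Icc 1 n, C := sum_le_sum fun j _ ↦ hX j ω
    _ = n * C := by simp

theorem stronglyMeasurable_walk (hX : Adapted ℱ X) (n : ℕ) : StronglyMeasurable[ℱ n] (walk X n) :=
  Finset.stronglyMeasurable_fun_sum _ fun j hj ↦
    ((hX j).mono (ℱ.mono (mem_Icc.1 hj).2) le_rfl).stronglyMeasurable

theorem memLp_walk [IsFiniteMeasure P] (hX : Adapted ℱ X) (hXC : ∀ n ω, |X n ω| ≤ C) (n : ℕ)
    (q : ℝ≥0∞) : MemLp (walk X n) q P :=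
  MemLp.of_bound ((stronglyMeasurable_walk hX n).mono (ℱ.le n)).aestronglyMeasurable _
    (ae_of_all _ (abs_walk_le hXC n))

noncomputable def weightedWalk (p : ℝ) (X : ℕ → Ω → ℝ) (n : ℕ) (ω : Ω) : ℝ :=
  stepWeight p n * walk X n ω

theorem weightedWalk_succ_sub (hp : 0 ≤ p) {n : ℕ} (hn : 1 ≤ n) (ω : Ω) :
    weightedWalk p X (n + 1) ω - weightedWalk p X n ω =
      stepWeight p (n + 1) * (X (n + 1) ω - p / n * walk X n ω) := by
  have hn' : (0 : ℝ) < n := by exact_mod_cast hn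
  simp only [weightedWalk, walk_succ, stepWeight_succ p hn]
  field_simp
  ring

theorem abs_weightedWalk_succ_sub_le (hp : 0 ≤ p) (hXC : ∀ n ω, |X n ω| ≤ C) {n : ℕ} (hn : 1 ≤ n)
    (ω : Ω) : |weightedWalk p X (n + 1) ω - weightedWalk p X n ω| ≤
      (1 + p) * C * stepWeight p (n + 1) := by
  have hn' : (0 : ℝ) < n := by exact_mod_cast hn
  have hdrift : |p / n * walk X n ω| ≤ p * C := by
    rw [abs_mul, abs_of_nonneg (by positivity)]
    calc p / n * |walk X n ω| ≤ p / n * (n * C) := by gcongr; exact abs_walk_le hXC n ω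
      _ = p * C := by field_simp
  rw [weightedWalk_succ_sub hp hn, abs_mul, abs_of_pos (stepWeight_pos hp _), mul_comm]
  refine mul_le_mul_of_nonneg_right ?_ (stepWeight_pos hp _).le
  calc |X (n + 1) ω - p / n * walk X n ω| ≤ |X (n + 1) ω| + |p / n * walk X n ω| := abs_sub _ _
    _ ≤ (1 + p) * C := by linarith [hXC (n + 1) ω]

theorem condExp_weightedWalk_succ_sub [IsFiniteMeasure P] (hp : 0 ≤ p) (hX : Adapted ℱ X)
    (hXC : ∀ n ω, |X n ω| ≤ C) {n : ℕ} (hn : 1 ≤ n)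
    (hcond : P[X (n + 1) | ℱ n] =ᵐ[P] fun ω ↦ p / n * walk X n ω) :
    P[weightedWalk p X (n + 1) - weightedWalk p X n | ℱ n] =ᵐ[P] 0 := by
  have hdrift : StronglyMeasurable[ℱ n] fun ω ↦ p / n * walk X n ω :=
    (stronglyMeasurable_walk hX n).const_mul _
  have hXint : Integrable (X (n + 1)) P :=
    Integrable.of_bound ((hX (n + 1)).mono (ℱ.le _) le_rfl).aestronglyMeasurable C
      (ae_of_all _ (hXC (n + 1)))
  have heq : weightedWalk p X (n + 1) - weightedWalk p X n =
      stepWeight p (n + 1) • (X (n + 1) - fun ω ↦ p / n * walk X n ω) := by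
    ext ω; simp [weightedWalk_succ_sub hp hn]
  rw [heq]
  refine (condExp_smul _ _ _).trans ?_
  have hdrift_int : Integrable (fun ω ↦ p / n * walk X n ω) P :=
    ((memLp_walk hX hXC n 1).integrable le_rfl).const_mul _
  filter_upwards [condExp_sub hXint hdrift_int (ℱ n), hcond] with ω h1 h2
  simp [h1, h2, condExp_of_stronglyMeasurable (ℱ.le n) hdrift hdrift_int]

-- At `k = 0` this is `0` (as `0 ^ (1 - 2 * p) = 0` and `0⁻¹ = 0`), so the first step of the walk,
-- which is not a martingale increment, drops out.
noncomputable def rescaledIncrement (p : ℝ) (X : ℕ → Ω → ℝ) (k : ℕ) (ω : Ω) : ℝ :=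
  ((k : ℝ) ^ (1 - 2 * p))⁻¹ * (weightedWalk p X (k + 1) ω - weightedWalk p X k ω)

theorem rescaledIncrement_zero (hp : p < 1 / 2) : rescaledIncrement p X 0 = 0 := by
  ext ω
  simp [rescaledIncrement, Real.zero_rpow (by linarith : 1 - 2 * p ≠ 0)]

theorem stronglyMeasurable_rescaledIncrement (hX : Adapted ℱ X) (k : ℕ) :
    StronglyMeasurable[ℱ (k + 1)] (rescaledIncrement p X k) :=
  (((stronglyMeasurable_walk hX (k + 1)).const_mul _).sub
    (((stronglyMeasurable_walk hX k).mono (ℱ.mono k.le_succ)).const_mul _)).const_mul _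

theorem memLp_rescaledIncrement [IsFiniteMeasure P] (hX : Adapted ℱ X) (hXC : ∀ n ω, |X n ω| ≤ C)
    (k : ℕ) (q : ℝ≥0∞) : MemLp (rescaledIncrement p X k) q P :=
  (((memLp_walk hX hXC (k + 1) q).const_mul _).sub
    ((memLp_walk hX hXC k q).const_mul _)).const_mul _

theorem condExp_rescaledIncrement [IsFiniteMeasure P] (hp0 : 0 ≤ p) (hp : p < 1 / 2)
    (hX : Adapted ℱ X) (hXC : ∀ n ω, |X n ω| ≤ C)
    (hcond : ∀ n : ℕ, 1 ≤ n → P[X (n + 1) | ℱ n] =ᵐ[P] fun ω ↦ p / n * walk X n ω) (k : ℕ) :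
    P[rescaledIncrement p X k | ℱ k] =ᵐ[P] 0 := by
  rcases Nat.eq_zero_or_pos k with rfl | hk
  · simp [rescaledIncrement_zero hp]
  have heq : rescaledIncrement p X k =
      ((k : ℝ) ^ (1 - 2 * p))⁻¹ • (weightedWalk p X (k + 1) - weightedWalk p X k) := rfl
  rw [heq]
  filter_upwards [condExp_smul (μ := P) ((k : ℝ) ^ (1 - 2 * p))⁻¹
    (weightedWalk p X (k + 1) - weightedWalk p X k) (ℱ k),
    condExp_weightedWalk_succ_sub hp0 hX hXC hk (hcond k hk)] with ω h1 h2
  simp [h1, h2]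

theorem abs_rescaledIncrement_le (hp0 : 0 ≤ p) (hp : p < 1 / 2) (hXC : ∀ n ω, |X n ω| ≤ C)
    (k : ℕ) (ω : Ω) : |rescaledIncrement p X k ω| ≤ (1 + p) * C * (k : ℝ) ^ (p - 1) := by
  have hC : 0 ≤ C := (abs_nonneg _).trans (hXC 0 ω)
  rcases Nat.eq_zero_or_pos k with rfl | hk
  · simp only [rescaledIncrement_zero hp, Pi.zero_apply, abs_zero]
    positivity
  have hk' : (0 : ℝ) < k := by exact_mod_cast hk
  have hweight : stepWeight p (k + 1) ≤ ((k : ℝ) ^ p)⁻¹ := by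
    rw [← one_div, le_div_iff₀ (by positivity), mul_comm]
    exact (mul_le_mul_of_nonneg_left (stepWeight_antitone hp0 k.le_succ) (by positivity)).trans
      (rpow_mul_stepWeight_le_one hp0 (by linarith) k)
  calc |rescaledIncrement p X k ω|
      = ((k : ℝ) ^ (1 - 2 * p))⁻¹ * |weightedWalk p X (k + 1) ω - weightedWalk p X k ω| := by
        rw [rescaledIncrement, abs_mul, abs_of_pos (by positivity)]
    _ ≤ ((k : ℝ) ^ (1 - 2 * p))⁻¹ * ((1 + p) * C * ((k : ℝ) ^ p)⁻¹) := by
        gcongr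
        exact (abs_weightedWalk_succ_sub_le hp0 hXC hk ω).trans (by gcongr)
    _ = (1 + p) * C * ((k : ℝ) ^ (-(1 - 2 * p)) * (k : ℝ) ^ (-p)) := by
        rw [Real.rpow_neg hk'.le, Real.rpow_neg hk'.le]; ring
    _ = (1 + p) * C * (k : ℝ) ^ (p - 1) := by rw [← Real.rpow_add hk']; ring_nf

theorem summable_integral_sq_rescaledIncrement [IsFiniteMeasure P] (hp0 : 0 ≤ p) (hp : p < 1 / 2)
    (hX : Adapted ℱ X) (hXC : ∀ n ω, |X n ω| ≤ C) :
    Summable fun k ↦ ∫ ω, rescaledIncrement p X k ω ^ 2 ∂P := by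
  refine Summable.of_nonneg_of_le (fun k ↦ integral_nonneg fun ω ↦ sq_nonneg _) (fun k ↦ ?_)
    ((Real.summable_nat_rpow.2 (by push_cast; linarith : (p - 1) * (2 : ℕ) < -1)).mul_left
      (P.real Set.univ * ((1 + p) * C) ^ 2))
  calc ∫ ω, rescaledIncrement p X k ω ^ 2 ∂P ≤ ∫ _, ((1 + p) * C * (k : ℝ) ^ (p - 1)) ^ 2 ∂P := by
        refine integral_mono (memLp_rescaledIncrement hX hXC k 2).integrable_sq
          (integrable_const _) fun ω ↦ ?_
        simpa only [sq_abs] using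
          pow_le_pow_left₀ (abs_nonneg _) (abs_rescaledIncrement_le hp0 hp hXC k ω) 2
    _ = P.real Set.univ * ((1 + p) * C) ^ 2 * (k : ℝ) ^ ((p - 1) * (2 : ℕ)) := by
        rw [integral_const, smul_eq_mul, Real.rpow_mul_natCast (Nat.cast_nonneg _)]; ring

theorem sum_range_rpow_mul_rescaledIncrement (hp : p < 1 / 2) {n : ℕ} (hn : 1 ≤ n) (ω : Ω) :
    ∑ k ∈ range n, (k : ℝ) ^ (1 - 2 * p) * rescaledIncrement p X k ω =
      weightedWalk p X n ω - weightedWalk p X 1 ω := by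
  rw [sum_range_eq_add_Ico _ hn, ← sum_Ico_sub (weightedWalk p X · ω) hn,
    rescaledIncrement_zero hp, Pi.zero_apply, mul_zero, zero_add]
  refine sum_congr rfl fun k hk ↦ mul_inv_cancel_left₀ ?_ _
  have : (0 : ℝ) < k := by exact_mod_cast (mem_Ico.1 hk).1
  positivity

theorem tendsto_walk_div_rpow_of_tendsto (hp0 : 0 ≤ p) (hp : p < 1 / 2) {ω : Ω} {L : ℝ}
    (hL : Tendsto (fun n ↦ ∑ k ∈ range n, rescaledIncrement p X k ω) atTop (𝓝 L)) :
    Tendsto (fun n ↦ walk X n ω / (n : ℝ) ^ (1 - p)) atTop (𝓝 0) := by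
  have hb_mono : Monotone fun n : ℕ ↦ (n : ℝ) ^ (1 - 2 * p) := fun m n hmn ↦
    Real.rpow_le_rpow (Nat.cast_nonneg _) (Nat.cast_le.2 hmn) (by linarith)
  have hb_top : Tendsto (fun n : ℕ ↦ (n : ℝ) ^ (1 - 2 * p)) atTop atTop :=
    (tendsto_rpow_atTop (by linarith)).comp tendsto_natCast_atTop_atTop
  refine tendsto_div_rpow_of_tendsto_stepWeight_mul hp0 hp
    ((hL.kronecker hb_mono hb_top).congr' ?_)
  filter_upwards [eventually_ge_atTop 1] with n hn
  simp only [sum_range_succ_sub_sum]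
  exact congrArg (· / _) (sum_range_rpow_mul_rescaledIncrement hp hn ω)

end ReinforcedWalk

theorem reinforced_strong_LLN_diffusive_general
    {Ω : Type*} {mΩ : MeasurableSpace Ω} (P : Measure Ω) [IsProbabilityMeasure P]
    (ℱ : Filtration ℕ mΩ)
    (p : ℝ) (hp : p ∈ Set.Ioo (0 : ℝ) (1 / 2))
    (hatX : ℕ → Ω → ℝ)
    (C : ℝ) (hbdd : ∀ n ω, |hatX n ω| ≤ C)
    (hadapt : Adapted ℱ hatX)
    (hcond : ∀ n : ℕ, 1 ≤ n →
      P[hatX (n + 1) | ℱ n]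
        =ᵐ[P] fun ω => (p / n) * ∑ j ∈ Finset.Icc 1 n, hatX j ω) :
    ∀ᵐ ω ∂P, Tendsto
      (fun n : ℕ => (∑ j ∈ Finset.Icc 1 n, hatX j ω) / (n : ℝ) ^ (1 - p))
      atTop (nhds 0) := by
  obtain ⟨hp0, hp⟩ := hp
  have hconv := exists_ae_tendsto_sum_range (stronglyMeasurable_rescaledIncrement hadapt)
    (fun k ↦ memLp_rescaledIncrement hadapt hbdd k 2)
    (condExp_rescaledIncrement hp0.le hp hadapt hbdd hcond)
    (summable_integral_sq_rescaledIncrement hp0.le hp hadapt hbdd)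
  filter_upwards [hconv] with ω ⟨L, hL⟩
  exact tendsto_walk_div_rpow_of_tendsto hp0.le hp hL

/-- strong law of large numbers for the positively step-reinforced
random walk with bounded centred steps and `p ∈ (0,1/2)`:
`Ŝₙ / n^{1-p} → 0` almost surely. -/
theorem reinforced_strong_LLN_diffusive
    {Ω : Type*} {mΩ : MeasurableSpace Ω} (P : Measure Ω) [IsProbabilityMeasure P]
    (ℱ : Filtration ℕ mΩ)
    (p : ℝ) (hp : p ∈ Set.Ioo (0 : ℝ) (1 / 2))
    (hatX : ℕ → Ω → ℝ)
    (C : ℝ) (hbdd : ∀ n ω, |hatX n ω| ≤ C)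
    (hadapt : Adapted ℱ hatX)
    (hcent : ∫ ω, hatX 1 ω ∂P = 0)
    (hcond : ∀ n : ℕ, 1 ≤ n →
      P[hatX (n + 1) | ℱ n]
        =ᵐ[P] fun ω => (p / n) * ∑ j ∈ Finset.Icc 1 n, hatX j ω) :
    ∀ᵐ ω ∂P, Tendsto
      (fun n : ℕ => (∑ j ∈ Finset.Icc 1 n, hatX j ω) / (n : ℝ) ^ (1 - p))
      atTop (nhds 0) :=
  reinforced_strong_LLN_diffusive_general P ℱ p hp hatX C hbdd hadapt hcond
end

section
/- Suppose $X \in L^2$ is centred with variance $\sigma^2$, and $p \in (1/2, 1)$. Then there is a numerical constant $c$ such that for all $n \geq 1$, $\mathbb{E}\left(\sup_{k \leq n} |\hat{S}_k|^2\right) \leq c\, \sigma^2\, n^{2p}$. -/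
open MeasureTheory ProbabilityTheory Filter Finset

/-!
Write `S n = X 1 + ⋯ + X n`. Since `E[S (n+1) | ℱ n] = (1 + p/n) S n`, the process `|S n|` is a
nonnegative submartingale, and Doob's L² inequality bounds `E (max_{k ≤ n} S k ^ 2)` by
`4 E (S n ^ 2)`. Expanding the square with the two conditional moments gives
`E (S (n+1) ^ 2) = (1 + 2p/n) E (S n ^ 2) + σ²`, and Bernoulli's inequality
`(1 + 2p/n) n ^ (2p) ≤ (n+1) ^ (2p)` turns this recursion into
`E (S n ^ 2) ≤ σ² n ^ (2p) ∑_{1 ≤ k ≤ n} k ^ (-2p)`; the sum is bounded by `ζ(2p)` because `2p > 1`.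
-/

lemma sq_max_sub_sq_le (a b : ℝ) : max a b ^ 2 - a ^ 2 ≤ 2 * b * (max a b - a) := by
  rcases le_total a b with h | h
  · rw [max_eq_right h]; nlinarith [sq_nonneg (a - b)]
  · rw [max_eq_left h]; simp

lemma one_add_div_mul_rpow_le {x s : ℝ} (hx : 0 < x) (hs : 1 ≤ s) :
    (1 + s / x) * x ^ s ≤ (x + 1) ^ s := by
  have hbern := one_add_mul_self_le_rpow_one_add (s := 1 / x) (by linarith [one_div_pos.2 hx]) hs
  calc (1 + s / x) * x ^ s = (1 + s * (1 / x)) * x ^ s := by ring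
    _ ≤ (1 + 1 / x) ^ s * x ^ s := by gcongr
    _ = (x + 1) ^ s := by
        rw [← Real.mul_rpow (by positivity) hx.le]
        congr 1
        field_simp

lemma le_mul_rpow_mul_sum_inv_rpow {a : ℕ → ℝ} {s c : ℝ} (hs : 1 ≤ s) (hc : 0 ≤ c)
    (h1 : a 1 ≤ c) (hrec : ∀ n : ℕ, 1 ≤ n → a (n + 1) ≤ (1 + s / n) * a n + c) :
    ∀ n : ℕ, 1 ≤ n → a n ≤ c * (n : ℝ) ^ s * ∑ k ∈ Icc 1 n, ((k : ℝ) ^ s)⁻¹ := by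
  intro n hn
  induction n, hn using Nat.le_induction with
  | base => simpa using h1
  | succ n hn ih =>
    have hnR : (0 : ℝ) < n := by exact_mod_cast hn
    have hgrow := one_add_div_mul_rpow_le hnR hs
    calc a (n + 1) ≤ (1 + s / n) * a n + c := hrec n hn
      _ ≤ (1 + s / n) * (c * (n : ℝ) ^ s * ∑ k ∈ Icc 1 n, ((k : ℝ) ^ s)⁻¹) + c := by
          gcongr
      _ = c * ((1 + s / n) * (n : ℝ) ^ s) * ∑ k ∈ Icc 1 n, ((k : ℝ) ^ s)⁻¹ + c := by ring
      _ ≤ c * ((n : ℝ) + 1) ^ s * ∑ k ∈ Icc 1 n, ((k : ℝ) ^ s)⁻¹ + c := by gcongr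
      _ = c * ((n + 1 : ℕ) : ℝ) ^ s * ∑ k ∈ Icc 1 (n + 1), ((k : ℝ) ^ s)⁻¹ := by
          rw [sum_Icc_succ_top (by omega)]
          push_cast
          field_simp

section RunningMax

variable {Ω : Type*} {m0 : MeasurableSpace Ω}

def runningMax (f : ℕ → Ω → ℝ) : ℕ → Ω → ℝ
  | 0 => f 0
  | n + 1 => runningMax f n ⊔ f (n + 1)

variable {f : ℕ → Ω → ℝ}

lemma le_runningMax {k n : ℕ} (hkn : k ≤ n) (ω : Ω) : f k ω ≤ runningMax f n ω := by
  induction n, hkn using Nat.le_induction with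
  | base => cases k <;> simp [runningMax]
  | succ n _ ih => exact ih.trans le_sup_left

lemma runningMax_nonneg (hf : ∀ k ω, 0 ≤ f k ω) (n : ℕ) (ω : Ω) : 0 ≤ runningMax f n ω :=
  (hf 0 ω).trans (le_runningMax n.zero_le ω)

lemma MeasureTheory.StronglyAdapted.runningMax {𝒢 : Filtration ℕ m0} (hf : StronglyAdapted 𝒢 f) :
    StronglyAdapted 𝒢 (runningMax f) := by
  intro n
  induction n with
  | zero => exact hf 0
  | succ n ih =>
    exact @StronglyMeasurable.sup _ _ _ _ (𝒢 (n + 1)) _ _ _ (ih.mono (𝒢.mono n.le_succ))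
      (hf (n + 1))

lemma memLp_runningMax {p : ENNReal} {μ : Measure Ω} (hf : ∀ k, MemLp (f k) p μ) (n : ℕ) :
    MemLp (runningMax f n) p μ := by
  induction n with
  | zero => exact hf 0
  | succ n ih => exact ih.sup (hf (n + 1))

lemma biSup_sq_le_sq_runningMax_abs (F : ℕ → Ω → ℝ) {s : Finset ℕ} {n : ℕ}
    (hs : ∀ k ∈ s, k ≤ n) (ω : Ω) :
    ⨆ k ∈ s, F k ω ^ 2 ≤ runningMax (fun k => |F k|) n ω ^ 2 :=
  Real.iSup_le (fun k => Real.iSup_le (fun hk => by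
      simpa only [sq_abs] using pow_le_pow_left₀ (abs_nonneg (F k ω))
        (le_runningMax (f := fun k => |F k|) (hs k hk) ω) 2)
    (sq_nonneg _)) (sq_nonneg _)

end RunningMax

namespace MeasureTheory.Submartingale

variable {Ω : Type*} {m0 : MeasurableSpace Ω} {μ : Measure Ω} [IsFiniteMeasure μ]
  {𝒢 : Filtration ℕ m0} {f : ℕ → Ω → ℝ}

lemma integral_mul_le_integral_mul (hf : Submartingale f 𝒢 μ) {i j : ℕ} (hij : i ≤ j)
    {g : Ω → ℝ} (hg : 0 ≤ g) (hgm : StronglyMeasurable[𝒢 i] g)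
    (hgi : Integrable (g * f i) μ) (hgj : Integrable (g * f j) μ) :
    ∫ ω, g ω * f i ω ∂μ ≤ ∫ ω, g ω * f j ω ∂μ := by
  have hpull : μ[g * f j|𝒢 i] =ᵐ[μ] g * μ[f j|𝒢 i] :=
    condExp_mul_of_stronglyMeasurable_left hgm hgj (hf.integrable j)
  calc ∫ ω, g ω * f i ω ∂μ ≤ ∫ ω, (g * μ[f j|𝒢 i]) ω ∂μ := by
        refine integral_mono_ae hgi (integrable_condExp.congr hpull) ?_
        filter_upwards [hf.ae_le_condExp hij] with ω hω
        exact mul_le_mul_of_nonneg_left hω (hg ω)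
    _ = ∫ ω, g ω * f j ω ∂μ := by
        rw [← integral_congr_ae hpull, integral_condExp (𝒢.le i)]; rfl

-- Integrate `M (n+1) ^ 2 - M n ^ 2 ≤ 2 f (n+1) (M (n+1) - M n)`
-- and use `E[M n f n] ≤ E[M n f (n+1)]`.
lemma integral_sq_runningMax_le_two_mul (hf : Submartingale f 𝒢 μ) (hf0 : ∀ k ω, 0 ≤ f k ω)
    (hL2 : ∀ k, MemLp (f k) 2 μ) (n : ℕ) :
    ∫ ω, runningMax f n ω ^ 2 ∂μ ≤ 2 * ∫ ω, runningMax f n ω * f n ω ∂μ := by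
  have hM := memLp_runningMax hL2
  induction n with
  | zero =>
    have : 0 ≤ ∫ ω, f 0 ω ^ 2 ∂μ := integral_nonneg fun ω => sq_nonneg _
    simp only [runningMax, ← sq]
    linarith
  | succ n ih =>
    have hpath : ∀ ω, runningMax f (n + 1) ω ^ 2 ≤ runningMax f n ω ^ 2
        + 2 * (runningMax f (n + 1) ω * f (n + 1) ω) - 2 * (runningMax f n ω * f (n + 1) ω) :=
      fun ω => by
        have := sq_max_sub_sq_le (runningMax f n ω) (f (n + 1) ω)
        simp only [runningMax, Pi.sup_apply] at this ⊢
        linarith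
    have hint : ∀ k l, Integrable (fun ω => runningMax f k ω * f l ω) μ :=
      fun k l => (hM k).integrable_mul (hL2 l)
    have hstep := hf.integral_mul_le_integral_mul n.le_succ (fun ω => runningMax_nonneg hf0 n ω)
      (hf.stronglyAdapted.runningMax n) (hint n n) (hint n (n + 1))
    have hsq := (hM n).integrable_sq
    have hcross := fun k => (hint k (n + 1)).const_mul 2
    have hsum : ∫ ω, runningMax f (n + 1) ω ^ 2 ∂μ ≤ ∫ ω, (runningMax f n ω ^ 2
        + 2 * (runningMax f (n + 1) ω * f (n + 1) ω) - 2 * (runningMax f n ω * f (n + 1) ω)) ∂μ :=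
      integral_mono (hM (n + 1)).integrable_sq ((hsq.fun_add (hcross _)).sub (hcross n)) hpath
    rw [integral_sub (hsq.fun_add (hcross _)) (hcross n), integral_add hsq (hcross _),
      integral_const_mul, integral_const_mul] at hsum
    linarith

theorem integral_sq_runningMax_le (hf : Submartingale f 𝒢 μ) (hf0 : ∀ k ω, 0 ≤ f k ω)
    (hL2 : ∀ k, MemLp (f k) 2 μ) (n : ℕ) :
    ∫ ω, runningMax f n ω ^ 2 ∂μ ≤ 4 * ∫ ω, f n ω ^ 2 ∂μ := by
  have hM := (memLp_runningMax hL2 n).integrable_sq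
  have hamgm : ∫ ω, runningMax f n ω * f n ω ∂μ
      ≤ ∫ ω, (runningMax f n ω ^ 2 / 4 + f n ω ^ 2) ∂μ :=
    integral_mono ((memLp_runningMax hL2 n).integrable_mul (hL2 n))
      ((hM.div_const 4).fun_add (hL2 n).integrable_sq)
      fun ω => by nlinarith [sq_nonneg (runningMax f n ω / 2 - f n ω)]
  rw [integral_add (hM.div_const 4) (hL2 n).integrable_sq, integral_div] at hamgm
  linarith [hf.integral_sq_runningMax_le_two_mul hf0 hL2 n]

end MeasureTheory.Submartingale

section PartialSum

variable {Ω : Type*} {mΩ : MeasurableSpace Ω} {P : Measure Ω} {ℱ : Filtration ℕ mΩ}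
  {X : ℕ → Ω → ℝ}

def partialSum (X : ℕ → Ω → ℝ) (n : ℕ) (ω : Ω) : ℝ := ∑ j ∈ Icc 1 n, X j ω

lemma partialSum_succ (X : ℕ → Ω → ℝ) (n : ℕ) :
    partialSum X (n + 1) = partialSum X n + X (n + 1) := by
  funext ω
  exact sum_Icc_succ_top (by omega) _

@[simp]
lemma partialSum_zero (X : ℕ → Ω → ℝ) : partialSum X 0 = 0 := by
  funext ω
  simp [partialSum]

lemma memLp_partialSum {q : ENNReal} (hX : ∀ n, MemLp (X n) q P) (n : ℕ) :
    MemLp (partialSum X n) q P := by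
  induction n with
  | zero => simp
  | succ n ih => rw [partialSum_succ]; exact ih.add (hX (n + 1))

lemma MeasureTheory.StronglyAdapted.partialSum (hX : StronglyAdapted ℱ X) :
    StronglyAdapted ℱ (partialSum X) := by
  intro n
  induction n with
  | zero => simpa using stronglyMeasurable_zero
  | succ n ih => rw [partialSum_succ]; exact (ih.mono (ℱ.mono n.le_succ)).add (hX (n + 1))

end PartialSum

section Reinforced

variable {Ω : Type*} {mΩ : MeasurableSpace Ω} {P : Measure Ω} {ℱ : Filtration ℕ mΩ} {p σ : ℝ}
  {X : ℕ → Ω → ℝ}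

lemma integral_sq_eq_of_condExp_sq_eq [IsProbabilityMeasure P] (hL2 : ∀ n, MemLp (X n) 2 P)
    (hvar1 : ∫ ω, X 1 ω ^ 2 ∂P = σ ^ 2)
    (hcond2 : ∀ n : ℕ, 1 ≤ n → P[fun ω => X (n + 1) ω ^ 2 | ℱ n]
      =ᵐ[P] fun ω => p * (∑ j ∈ Icc 1 n, X j ω ^ 2) / n + (1 - p) * σ ^ 2)
    (n : ℕ) (hn : 1 ≤ n) : ∫ ω, X n ω ^ 2 ∂P = σ ^ 2 := by
  induction n using Nat.strong_induction_on with
  | _ n ih =>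
    obtain rfl | ⟨m, hm, rfl⟩ : n = 1 ∨ ∃ m, 1 ≤ m ∧ n = m + 1 :=
      (eq_or_lt_of_le hn).imp Eq.symm fun h => ⟨n - 1, by omega, by omega⟩
    · exact hvar1
    have hprev : ∑ j ∈ Icc 1 m, ∫ ω, X j ω ^ 2 ∂P = m * σ ^ 2 := by
      rw [sum_congr rfl fun j hj => ih j (by grind) (mem_Icc.1 hj).1]
      simp
    have hmR : (0 : ℝ) < m := by exact_mod_cast hm
    have hint := fun j (_ : j ∈ Icc 1 m) => (hL2 j).integrable_sq
    rw [← integral_condExp (ℱ.le m), integral_congr_ae (hcond2 m hm), integral_add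
      ((integrable_finsetSum _ hint).const_mul p |>.div_const _) (integrable_const _),
      integral_div, integral_const_mul, integral_finsetSum _ hint, hprev]
    simp only [integral_const, probReal_univ, smul_eq_mul, one_mul]
    field_simp
    ring

lemma integral_partialSum_mul_succ [IsFiniteMeasure P] (hL2 : ∀ n, MemLp (X n) 2 P)
    (hadapt : StronglyAdapted ℱ X)
    (hcond : ∀ n : ℕ, 1 ≤ n →
      P[X (n + 1) | ℱ n] =ᵐ[P] fun ω => p / n * partialSum X n ω)
    (n : ℕ) (hn : 1 ≤ n) :
    ∫ ω, partialSum X n ω * X (n + 1) ω ∂P = p / n * ∫ ω, partialSum X n ω ^ 2 ∂P := by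
  have hpull : P[partialSum X n * X (n + 1) | ℱ n] =ᵐ[P] partialSum X n * P[X (n + 1) | ℱ n] :=
    condExp_mul_of_stronglyMeasurable_left (hadapt.partialSum n)
      ((memLp_partialSum hL2 n).integrable_mul (hL2 (n + 1))) ((hL2 (n + 1)).integrable one_le_two)
  calc ∫ ω, partialSum X n ω * X (n + 1) ω ∂P
      = ∫ ω, P[partialSum X n * X (n + 1) | ℱ n] ω ∂P := (integral_condExp (ℱ.le n)).symm
    _ = ∫ ω, p / n * partialSum X n ω ^ 2 ∂P := by
        refine integral_congr_ae ?_
        filter_upwards [hpull, hcond n hn] with ω hpull hcond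
        rw [hpull, Pi.mul_apply, hcond, partialSum]
        ring
    _ = p / n * ∫ ω, partialSum X n ω ^ 2 ∂P := integral_const_mul _ _

lemma integral_sq_partialSum_succ [IsFiniteMeasure P] (hL2 : ∀ n, MemLp (X n) 2 P)
    (hadapt : StronglyAdapted ℱ X)
    (hcond : ∀ n : ℕ, 1 ≤ n →
      P[X (n + 1) | ℱ n] =ᵐ[P] fun ω => p / n * partialSum X n ω)
    (n : ℕ) (hn : 1 ≤ n) (hvar : ∫ ω, X (n + 1) ω ^ 2 ∂P = σ ^ 2) :
    ∫ ω, partialSum X (n + 1) ω ^ 2 ∂P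
      = (1 + 2 * p / n) * ∫ ω, partialSum X n ω ^ 2 ∂P + σ ^ 2 := by
  have hS := memLp_partialSum hL2 n
  have hcross : Integrable (fun ω => 2 * (partialSum X n ω * X (n + 1) ω)) P :=
    (hS.integrable_mul (hL2 (n + 1))).const_mul 2
  have hexpand : (fun ω => partialSum X (n + 1) ω ^ 2) = fun ω =>
      partialSum X n ω ^ 2 + 2 * (partialSum X n ω * X (n + 1) ω) + X (n + 1) ω ^ 2 := by
    funext ω
    rw [partialSum_succ, Pi.add_apply]
    ring
  rw [hexpand, integral_add (hS.integrable_sq.fun_add hcross) (hL2 (n + 1)).integrable_sq,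
    integral_add hS.integrable_sq hcross, integral_const_mul,
    integral_partialSum_mul_succ hL2 hadapt hcond n hn, hvar]
  ring

lemma condExp_partialSum_succ [IsFiniteMeasure P] (hL2 : ∀ n, MemLp (X n) 2 P)
    (hadapt : StronglyAdapted ℱ X)
    (hcond : ∀ n : ℕ, 1 ≤ n →
      P[X (n + 1) | ℱ n] =ᵐ[P] fun ω => p / n * partialSum X n ω)
    (n : ℕ) (hn : 1 ≤ n) :
    P[partialSum X (n + 1) | ℱ n] =ᵐ[P] fun ω => (1 + p / n) * partialSum X n ω := by
  have hS := (memLp_partialSum hL2 n).integrable one_le_two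
  rw [partialSum_succ]
  filter_upwards [condExp_add hS ((hL2 (n + 1)).integrable one_le_two) (ℱ n), hcond n hn]
    with ω hadd hcond
  rw [hadd, Pi.add_apply, condExp_of_stronglyMeasurable (ℱ.le n) (hadapt.partialSum n) hS, hcond,
    partialSum]
  ring

lemma submartingale_abs_partialSum [IsFiniteMeasure P] (hp : 0 ≤ p) (hL2 : ∀ n, MemLp (X n) 2 P)
    (hadapt : StronglyAdapted ℱ X)
    (hcond : ∀ n : ℕ, 1 ≤ n →
      P[X (n + 1) | ℱ n] =ᵐ[P] fun ω => p / n * partialSum X n ω) :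
    Submartingale (fun n => |partialSum X n|) ℱ P := by
  refine submartingale_nat (fun n => continuous_abs.comp_stronglyMeasurable (hadapt.partialSum n))
    (fun n => ((memLp_partialSum hL2 n).integrable one_le_two).abs) fun n => ?_
  rcases Nat.eq_zero_or_pos n with rfl | hn
  · filter_upwards [condExp_nonneg (m := ℱ 0) (f := |partialSum X 1|) (μ := P)
      (.of_forall fun ω => abs_nonneg _)] with ω hω
    simpa using hω
  filter_upwards [condExp_partialSum_succ hL2 hadapt hcond n hn,
    abs_condExp_ae_le_condExp_abs (m := ℱ n) (μ := P) (partialSum X (n + 1))] with ω hce habs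
  calc |partialSum X n| ω ≤ (1 + p / n) * |partialSum X n ω| :=
        le_mul_of_one_le_left (abs_nonneg _) (le_add_of_nonneg_right (by positivity))
    _ = |P[partialSum X (n + 1) | ℱ n] ω| := by
        rw [hce, abs_mul, abs_of_pos (by positivity : (0 : ℝ) < 1 + p / n)]
    _ ≤ P[(|partialSum X (n + 1)|) | ℱ n] ω := habs

end Reinforced

theorem reinforced_maximal_inequality_superdiffusive_general
    {Ω : Type*} {mΩ : MeasurableSpace Ω} (P : Measure Ω) [IsProbabilityMeasure P]
    (ℱ : Filtration ℕ mΩ)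
    (p σ : ℝ) (hp : p ∈ Set.Ioo (1 / 2 : ℝ) 1)
    (hatX : ℕ → Ω → ℝ)
    (hL2 : ∀ n, MemLp (hatX n) 2 P)
    (hadapt : StronglyAdapted ℱ hatX)
    (hvar1 : ∫ ω, (hatX 1 ω) ^ 2 ∂P = σ ^ 2)
    (hcond : ∀ n : ℕ, 1 ≤ n →
      P[hatX (n + 1) | ℱ n]
        =ᵐ[P] fun ω => (p / n) * ∑ j ∈ Finset.Icc 1 n, hatX j ω)
    (hcond2 : ∀ n : ℕ, 1 ≤ n →
      P[fun ω => (hatX (n + 1) ω) ^ 2 | ℱ n]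
        =ᵐ[P] fun ω => p * (∑ j ∈ Finset.Icc 1 n, (hatX j ω) ^ 2) / n + (1 - p) * σ ^ 2) :
    ∃ c : ℝ, 0 < c ∧ ∀ n : ℕ, 1 ≤ n →
      ∫ ω, (⨆ k ∈ Finset.Icc 1 n, (∑ j ∈ Finset.Icc 1 k, hatX j ω) ^ 2) ∂P
        ≤ c * σ ^ 2 * (n : ℝ) ^ (2 * p) := by
  have hsummable : Summable fun k : ℕ => ((k : ℝ) ^ (2 * p))⁻¹ :=
    Real.summable_nat_rpow_inv.2 (by linarith [hp.1])
  set Z := ∑' k : ℕ, ((k : ℝ) ^ (2 * p))⁻¹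
  have hZ : 0 < Z := hsummable.tsum_pos (fun k => by positivity) 1 (by simp)
  have hvar := integral_sq_eq_of_condExp_sq_eq hL2 hvar1 hcond2
  have hmoment := le_mul_rpow_mul_sum_inv_rpow (a := fun n => ∫ ω, partialSum hatX n ω ^ 2 ∂P)
    (by linarith [hp.1]) (sq_nonneg σ) (by simpa [partialSum] using hvar1.le)
    fun n hn => (integral_sq_partialSum_succ hL2 hadapt hcond n hn (hvar _ (by omega))).le
  have hL2abs := fun k => (memLp_partialSum hL2 k).abs
  have hdoob := (submartingale_abs_partialSum (by linarith [hp.1]) hL2 hadapt hcond)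
    |>.integral_sq_runningMax_le (fun _ _ => abs_nonneg _) hL2abs
  refine ⟨4 * Z, by positivity, fun n hn => ?_⟩
  calc ∫ ω, (⨆ k ∈ Icc 1 n, partialSum hatX k ω ^ 2) ∂P
      ≤ ∫ ω, runningMax (fun k => |partialSum hatX k|) n ω ^ 2 ∂P :=
        integral_mono_of_nonneg (.of_forall fun ω => Real.iSup_nonneg fun k =>
            Real.iSup_nonneg fun _ => sq_nonneg _)
          (memLp_runningMax hL2abs n).integrable_sq
          (.of_forall (biSup_sq_le_sq_runningMax_abs _ (fun k hk => (mem_Icc.1 hk).2)))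
    _ ≤ 4 * ∫ ω, partialSum hatX n ω ^ 2 ∂P := by simpa using hdoob n
    _ ≤ 4 * (σ ^ 2 * (n : ℝ) ^ (2 * p) * Z) := by
        gcongr
        exact (hmoment n hn).trans <| by
          gcongr; exact hsummable.sum_le_tsum _ fun k _ => by positivity
    _ = 4 * Z * σ ^ 2 * (n : ℝ) ^ (2 * p) := by ring

/-- maximal inequality in the superdiffusive regime `p ∈ (1/2,1)`:
`E(sup_{k ≤ n} |Ŝₖ|²) ≤ c σ² n^{2p}` for a numerical constant `c`. -/
theorem reinforced_maximal_inequality_superdiffusive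
    {Ω : Type*} {mΩ : MeasurableSpace Ω} (P : Measure Ω) [IsProbabilityMeasure P]
    (ℱ : Filtration ℕ mΩ)
    (p σ : ℝ) (hp : p ∈ Set.Ioo (1 / 2 : ℝ) 1)
    (hatX : ℕ → Ω → ℝ)
    (hL2 : ∀ n, MemLp (hatX n) 2 P)
    (hadapt : StronglyAdapted ℱ hatX)
    (hcent : ∫ ω, hatX 1 ω ∂P = 0)
    (hvar1 : ∫ ω, (hatX 1 ω) ^ 2 ∂P = σ ^ 2)
    (hcond : ∀ n : ℕ, 1 ≤ n →
      P[hatX (n + 1) | ℱ n]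
        =ᵐ[P] fun ω => (p / n) * ∑ j ∈ Finset.Icc 1 n, hatX j ω)
    (hcond2 : ∀ n : ℕ, 1 ≤ n →
      P[fun ω => (hatX (n + 1) ω) ^ 2 | ℱ n]
        =ᵐ[P] fun ω => p * (∑ j ∈ Finset.Icc 1 n, (hatX j ω) ^ 2) / n + (1 - p) * σ ^ 2) :
    ∃ c : ℝ, 0 < c ∧ ∀ n : ℕ, 1 ≤ n →
      ∫ ω, (⨆ k ∈ Finset.Icc 1 n, (∑ j ∈ Finset.Icc 1 k, hatX j ω) ^ 2) ∂P
        ≤ c * σ ^ 2 * (n : ℝ) ^ (2 * p) :=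
  reinforced_maximal_inequality_superdiffusive_general P ℱ p σ hp hatX hL2 hadapt hvar1 hcond hcond2
end

section
/- Let $X \in L^2$ be centred with variance $\sigma^2$, $p \in (0,1)$, and let $(S_n)$ and $(\hat{S}_n)$ be the random walk and its positively step-reinforced version built from the same steps and reinforcement randomness. Then for every $k \geq 2$, $\mathbb{E}(\Delta\hat{M}_k \cdot X_k \mid \mathcal{F}_{k-1}) = \hat{a}_k (1-p)\sigma^2$, where $\hat{M}_k = \hat{a}_k\hat{S}_k$ and $\Delta\hat{M}_k = \hat{M}_k - \hat{M}_{k-1}$. -/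
open MeasureTheory ProbabilityTheory Filter Finset

/-- `âₙ = ∏_{k=1}^{n-1} k/(k+p) = Γ(n)/Γ(n+p)` (normalised so that `â₁ = 1`). -/
noncomputable def hata (p : ℝ) (n : ℕ) : ℝ :=
  ∏ k ∈ Finset.Ico 1 n, (k : ℝ) / ((k : ℝ) + p)

/-!
Since `Ŝₖ = Ŝₖ₋₁ + X̂ₖ`, we have `ΔM̂ₖ Xₖ = âₖ X̂ₖ Xₖ + (âₖ - âₖ₋₁) Ŝₖ₋₁ Xₖ`, and splitting the
reinforced step along the reinforcement event gives
`X̂ₖ Xₖ = ∑_{j<k} X̂ⱼ 1{εₖ = 1, U[k-1] = j} Xₖ + 1{εₖ = 0} Xₖ²`.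
Every term is an `ℱ_{k-1}`-measurable factor times a function of `(εₖ, U[k-1], Xₖ)`, which is
independent of `ℱ_{k-1}`, so its conditional expectation is the factor times an expectation.
As `(εₖ, U[k-1])` is independent of the centred `Xₖ`, only the innovation term survives, with
expectation `P(εₖ = 0) E[Xₖ²] = (1 - p) σ²`.
-/

section

variable {Ω β : Type*} {m mΩ : MeasurableSpace Ω} {mβ : MeasurableSpace β} {P : Measure Ω}

theorem ProbabilityTheory.IndepFun.integral_indicator_preimage {Y : Ω → β} {Z : Ω → ℝ}
    (h : IndepFun Y Z P) (hY : Measurable Y) (hZ : AEStronglyMeasurable Z P) {s : Set β}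
    (hs : MeasurableSet s) :
    ∫ ω, (Y ⁻¹' s).indicator Z ω ∂P = P.real (Y ⁻¹' s) * ∫ ω, Z ω ∂P := by
  have hind : IndepFun (s.indicator (1 : β → ℝ) ∘ Y) Z P :=
    h.comp (measurable_one.indicator hs) measurable_id
  calc ∫ ω, (Y ⁻¹' s).indicator Z ω ∂P = ∫ ω, (s.indicator 1 ∘ Y) ω * Z ω ∂P := by
        congr with ω
        by_cases hω : Y ω ∈ s <;> simp [hω]
    _ = (∫ ω, (s.indicator 1 ∘ Y) ω ∂P) * ∫ ω, Z ω ∂P :=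
        hind.integral_fun_mul_eq_mul_integral
          ((measurable_one.indicator hs).comp hY).aestronglyMeasurable hZ
    _ = P.real (Y ⁻¹' s) * ∫ ω, Z ω ∂P := by rw [← integral_indicator_one (hY hs)]; rfl

theorem condExp_mul_eq_mul_integral_of_indep [IsFiniteMeasure P] {m₁ : MeasurableSpace Ω}
    (hm₁ : m₁ ≤ mΩ) (hm : m ≤ mΩ) (hind : Indep m₁ m P) {G f : Ω → ℝ}
    (hG : StronglyMeasurable[m] G) (hf : StronglyMeasurable[m₁] f)
    (hGf : Integrable (fun ω => G ω * f ω) P)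
    (hfi : Integrable f P) :
    P[fun ω => G ω * f ω | m] =ᵐ[P] fun ω => G ω * ∫ ω', f ω' ∂P := by
  filter_upwards [condExp_mul_of_stronglyMeasurable_left hG hGf hfi,
    condExp_indep_eq hm₁ hm hf hind] with ω hpull hconst
  exact hpull.trans (by rw [Pi.mul_apply, hconst])

theorem condExp_sum_mul_eq_zero_of_indep [IsFiniteMeasure P] {ι : Type*} {s : Finset ι}
    {m₁ : MeasurableSpace Ω} (hm₁ : m₁ ≤ mΩ) (hm : m ≤ mΩ) (hind : Indep m₁ m P)
    {G f : ι → Ω → ℝ} (hG : ∀ i ∈ s, StronglyMeasurable[m] (G i))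
    (hf : ∀ i ∈ s, StronglyMeasurable[m₁] (f i))
    (hGf : ∀ i ∈ s, Integrable (fun ω => G i ω * f i ω) P) (hfi : ∀ i ∈ s, Integrable (f i) P)
    (hf₀ : ∀ i ∈ s, ∫ ω, f i ω ∂P = 0) :
    P[fun ω => ∑ i ∈ s, G i ω * f i ω | m] =ᵐ[P] 0 := by
  have hzero : ∀ i ∈ s, P[fun ω => G i ω * f i ω | m] =ᵐ[P] 0 := fun i hi =>
    (condExp_mul_eq_mul_integral_of_indep hm₁ hm hind (hG i hi) (hf i hi) (hGf i hi)
      (hfi i hi)).trans (Eventually.of_forall fun ω => by simp [hf₀ i hi])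
  simpa only [Finset.sum_fn, Finset.sum_const_zero] using
    (condExp_finsetSum hGf m).trans (eventuallyEq_sum hzero)

theorem reinforced_increment_mul_eq (ε : Ω → Bool) (U : Ω → ℕ) (X : Ω → ℝ) (Y : ℕ → Ω → ℝ)
    {N : ℕ} (a b : ℝ) {ω : Ω} (hU : U ω ∈ Icc 1 N)
    (hZ : Y (N + 1) ω = if ε ω = true then Y (U ω) ω else X ω) :
    (a * ∑ j ∈ Icc 1 (N + 1), Y j ω - b * ∑ j ∈ Icc 1 N, Y j ω) * X ω =
      ∑ j ∈ Icc 1 N, a * Y j ω * ((fun ω => (ε ω, U ω)) ⁻¹' {(true, j)}).indicator X ω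
        + a * (ε ⁻¹' {false}).indicator (fun ω => X ω ^ 2) ω
        + ∑ j ∈ Icc 1 N, (a - b) * Y j ω * X ω := by
  have hold : ∑ j ∈ Icc 1 N, (a - b) * Y j ω * X ω = (a - b) * (∑ j ∈ Icc 1 N, Y j ω) * X ω := by
    rw [← Finset.sum_mul, ← Finset.mul_sum]
  rw [Finset.sum_Icc_succ_top (by omega), hZ, hold]
  by_cases hε : ε ω = true
  · have hsel : ∑ j ∈ Icc 1 N, a * Y j ω * ((fun ω => (ε ω, U ω)) ⁻¹' {(true, j)}).indicator X ω
        = a * Y (U ω) ω * X ω := by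
      rw [Finset.sum_eq_single_of_mem (U ω) hU fun j _ hj => by simp [Ne.symm hj]]
      simp [hε]
    rw [hsel, Set.indicator_of_notMem (by simp [hε]), if_pos hε]
    ring
  · have hsel : ∑ j ∈ Icc 1 N, a * Y j ω * ((fun ω => (ε ω, U ω)) ⁻¹' {(true, j)}).indicator X ω
        = 0 :=
      Finset.sum_eq_zero fun j _ => by simp [hε]
    rw [hsel, Set.indicator_of_mem (by simpa using hε), if_neg hε]
    ring

section ReinforcedStep

variable [IsFiniteMeasure P] {ε : Ω → Bool} {U : Ω → ℕ} {X : Ω → ℝ}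

theorem condExp_sum_mul_indicator_reinforced_eq_zero (hm : m ≤ mΩ) (hε : Measurable ε)
    (hU : Measurable U) (hX : Measurable X) (hX2 : MemLp X 2 P)
    (hindep : Indep (MeasurableSpace.comap (fun ω => (ε ω, U ω, X ω)) inferInstance) m P)
    (hindep' : IndepFun (fun ω => (ε ω, U ω)) X P) (hXcent : ∫ ω, X ω ∂P = 0)
    {s : Finset ℕ} {G : ℕ → Ω → ℝ} (hGm : ∀ j ∈ s, StronglyMeasurable[m] (G j))
    (hG2 : ∀ j ∈ s, MemLp (G j) 2 P) :
    P[fun ω => ∑ j ∈ s, G j ω * ((fun ω => (ε ω, U ω)) ⁻¹' {(true, j)}).indicator X ω | m]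
      =ᵐ[P] 0 := by
  set V : Ω → Bool × ℕ := fun ω => (ε ω, U ω)
  have hT := comap_measurable (m := inferInstance) (fun ω => (ε ω, U ω, X ω))
  have hselL2 : ∀ j, MemLp ((V ⁻¹' {(true, j)}).indicator X) 2 P := fun j =>
    hX2.indicator ((hε.prodMk hU) (measurableSet_singleton _))
  have hsel : ∀ j, ∫ ω, (V ⁻¹' {(true, j)}).indicator X ω ∂P = 0 := fun j => by
    rw [hindep'.integral_indicator_preimage (hε.prodMk hU) hX.aestronglyMeasurable
      (measurableSet_singleton _), hXcent, mul_zero]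
  exact condExp_sum_mul_eq_zero_of_indep (hε.prodMk (hU.prodMk hX)).comap_le hm hindep hGm
    (f := fun j => (V ⁻¹' {(true, j)}).indicator X)
    (fun j _ => (hT.snd.snd.indicator
      ((hT.fst.prodMk hT.snd.fst) (measurableSet_singleton _))).stronglyMeasurable)
    (fun j hj => (hG2 j hj).integrable_mul (hselL2 j))
    (fun j _ => (hselL2 j).integrable one_le_two) (fun j _ => hsel j)

theorem condExp_const_mul_indicator_sq_of_indep (hm : m ≤ mΩ) (hε : Measurable ε)
    (hU : Measurable U) (hX : Measurable X) (hX2 : MemLp X 2 P)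
    (hindep : Indep (MeasurableSpace.comap (fun ω => (ε ω, U ω, X ω)) inferInstance) m P)
    (hindep' : IndepFun (fun ω => (ε ω, U ω)) X P) (a : ℝ) :
    P[fun ω => a * (ε ⁻¹' {false}).indicator (fun ω => X ω ^ 2) ω | m]
      =ᵐ[P] fun _ => a * (P.real (ε ⁻¹' {false}) * ∫ ω, X ω ^ 2 ∂P) := by
  have hfresh : ∫ ω, (ε ⁻¹' {false}).indicator (fun ω => X ω ^ 2) ω ∂P
      = P.real (ε ⁻¹' {false}) * ∫ ω, X ω ^ 2 ∂P :=
    IndepFun.integral_indicator_preimage (hindep'.comp measurable_fst (measurable_id.pow_const 2))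
      hε (hX.pow_const 2).aestronglyMeasurable (measurableSet_singleton _)
  have hint : Integrable ((ε ⁻¹' {false}).indicator fun ω => X ω ^ 2) P :=
    hX2.integrable_sq.indicator (hε (measurableSet_singleton _))
  have hT := comap_measurable (m := inferInstance) (fun ω => (ε ω, U ω, X ω))
  rw [← hfresh]
  exact condExp_mul_eq_mul_integral_of_indep (hε.prodMk (hU.prodMk hX)).comap_le hm hindep
    (G := fun _ => a) stronglyMeasurable_const
    ((hT.snd.snd.pow_const 2).indicator (hT.fst (measurableSet_singleton _))).stronglyMeasurable
    (hint.const_mul a) hint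

theorem condExp_reinforced_increment_mul (hm : m ≤ mΩ) (hε : Measurable ε)
    (hU : Measurable U) (hX : Measurable X) (hX2 : MemLp X 2 P)
    (hindep : Indep (MeasurableSpace.comap (fun ω => (ε ω, U ω, X ω)) inferInstance) m P)
    (hindep' : IndepFun (fun ω => (ε ω, U ω)) X P) (hXcent : ∫ ω, X ω ∂P = 0)
    {Y : ℕ → Ω → ℝ} {N : ℕ} (hYm : ∀ j ∈ Icc 1 N, StronglyMeasurable[m] (Y j))
    (hY2 : ∀ j ∈ Icc 1 N, MemLp (Y j) 2 P) (hUrange : ∀ ω, U ω ∈ Icc 1 N)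
    (hZ : ∀ ω, Y (N + 1) ω = if ε ω = true then Y (U ω) ω else X ω) (a b : ℝ) :
    P[fun ω => (a * ∑ j ∈ Icc 1 (N + 1), Y j ω - b * ∑ j ∈ Icc 1 N, Y j ω) * X ω | m]
      =ᵐ[P] fun _ => a * (P.real (ε ⁻¹' {false}) * ∫ ω, X ω ^ 2 ∂P) := by
  set V : Ω → Bool × ℕ := fun ω => (ε ω, U ω)
  have hdecomp : (fun ω => (a * ∑ j ∈ Icc 1 (N + 1), Y j ω - b * ∑ j ∈ Icc 1 N, Y j ω) * X ω)
      = (fun ω => ∑ j ∈ Icc 1 N, a * Y j ω * (V ⁻¹' {(true, j)}).indicator X ω)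
        + (fun ω => a * (ε ⁻¹' {false}).indicator (fun ω => X ω ^ 2) ω)
        + (fun ω => ∑ j ∈ Icc 1 N, (a - b) * Y j ω * X ω) :=
    funext fun ω => reinforced_increment_mul_eq ε U X Y a b (hUrange ω) (hZ ω)
  have hselint :
      Integrable (fun ω => ∑ j ∈ Icc 1 N, a * Y j ω * (V ⁻¹' {(true, j)}).indicator X ω) P :=
    integrable_finsetSum _ fun j hj => ((hY2 j hj).const_mul a).integrable_mul
      (hX2.indicator ((hε.prodMk hU) (measurableSet_singleton _)))
  have hfreshint : Integrable (fun ω => a * (ε ⁻¹' {false}).indicator (fun ω => X ω ^ 2) ω) P :=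
    (hX2.integrable_sq.indicator (hε (measurableSet_singleton _))).const_mul a
  have hprevint : Integrable (fun ω => ∑ j ∈ Icc 1 N, (a - b) * Y j ω * X ω) P :=
    integrable_finsetSum _ fun j hj => ((hY2 j hj).const_mul (a - b)).integrable_mul hX2
  have hprev : P[fun ω => ∑ j ∈ Icc 1 N, (a - b) * Y j ω * X ω | m] =ᵐ[P] 0 :=
    condExp_sum_mul_eq_zero_of_indep (hε.prodMk (hU.prodMk hX)).comap_le hm hindep
      (G := fun j ω => (a - b) * Y j ω) (fun j hj => (hYm j hj).const_mul _)
      (fun _ _ => (comap_measurable (fun ω => (ε ω, U ω, X ω))).snd.snd.stronglyMeasurable)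
      (fun j hj => ((hY2 j hj).const_mul (a - b)).integrable_mul hX2)
      (fun _ _ => hX2.integrable one_le_two) (fun _ _ => hXcent)
  rw [hdecomp]
  filter_upwards [condExp_add (hselint.add hfreshint) hprevint m,
    condExp_add hselint hfreshint m,
    condExp_sum_mul_indicator_reinforced_eq_zero hm hε hU hX hX2 hindep hindep' hXcent
      (G := fun j ω => a * Y j ω) (fun j hj => (hYm j hj).const_mul a)
      (fun j hj => (hY2 j hj).const_mul a),
    condExp_const_mul_indicator_sq_of_indep hm hε hU hX hX2 hindep hindep' a, hprev]
    with ω h₁ h₂ h₃ h₄ h₅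
  rw [h₁, Pi.add_apply, h₂, Pi.add_apply, h₃, h₄, h₅]
  simp

end ReinforcedStep

end

theorem reinforced_predictable_covariation_with_walk_general
    {Ω : Type*} {mΩ : MeasurableSpace Ω} (P : Measure Ω) [IsProbabilityMeasure P]
    (ℱ : Filtration ℕ mΩ)
    (p σ : ℝ) (hp : p ∈ Set.Ioo (0 : ℝ) 1)
    (X hatX : ℕ → Ω → ℝ) (ε : ℕ → Ω → Bool) (U : ℕ → Ω → ℕ)
    (hXL2 : ∀ k, MemLp (X k) 2 P) (hhatL2 : ∀ k, MemLp (hatX k) 2 P)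
    (hXmeas : ∀ k, Measurable (X k)) (hεmeas : ∀ k, Measurable (ε k))
    (hUmeas : ∀ k, Measurable (U k))
    (hadapt : Adapted ℱ hatX)
    -- `X̂ₖ = Xₖ 1_{εₖ=0} + X̂_{U[k-1]} 1_{εₖ=1}`, with `U[k-1]` uniform on `{1,…,k-1}`
    (hdef : ∀ k : ℕ, 2 ≤ k → ∀ ω, hatX k ω =
      if ε k ω = true then hatX (U (k - 1) ω) ω else X k ω)
    (hUrange : ∀ k : ℕ, 2 ≤ k → ∀ ω, U (k - 1) ω ∈ Finset.Icc 1 (k - 1))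
    -- `(εₖ, U[k-1], Xₖ)` is independent of `ℱ_{k-1}`
    (hindep : ∀ k : ℕ, 2 ≤ k → Indep
      (MeasurableSpace.comap (fun ω => (ε k ω, U (k - 1) ω, X k ω)) inferInstance)
      (ℱ (k - 1)) P)
    -- `(εₖ, U[k-1])` is independent of `Xₖ`
    (hindep' : ∀ k : ℕ, 2 ≤ k →
      IndepFun (fun ω => (ε k ω, U (k - 1) ω)) (X k) P)
    (hlaw' : ∀ k : ℕ, 2 ≤ k → P {ω | ε k ω = false} = ENNReal.ofReal (1 - p))
    -- the steps are centred with variance `σ²`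
    (hXcent : ∀ k, ∫ ω, X k ω ∂P = 0)
    (hXvar : ∀ k, ∫ ω, (X k ω) ^ 2 ∂P = σ ^ 2) :
    ∀ k : ℕ, 2 ≤ k →
      P[fun ω =>
          (hata p k * ∑ j ∈ Finset.Icc 1 k, hatX j ω
            - hata p (k - 1) * ∑ j ∈ Finset.Icc 1 (k - 1), hatX j ω) * X k ω
        | ℱ (k - 1)]
        =ᵐ[P] fun _ => hata p k * (1 - p) * σ ^ 2 := by
  intro k hk
  obtain ⟨n, rfl⟩ : ∃ n, k = n + 2 := ⟨k - 2, by omega⟩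
  have hfresh : P.real (ε (n + 2) ⁻¹' {false}) = 1 - p :=
    (congrArg ENNReal.toReal (hlaw' (n + 2) hk)).trans (ENNReal.toReal_ofReal (by linarith [hp.2]))
  have hstep := condExp_reinforced_increment_mul (ℱ.le (n + 1)) (hεmeas (n + 2))
    (hUmeas (n + 1)) (hXmeas (n + 2)) (hXL2 (n + 2)) (hindep (n + 2) hk) (hindep' (n + 2) hk)
    (hXcent (n + 2)) (Y := hatX)
    (fun j hj => ((hadapt j).mono (ℱ.mono (Finset.mem_Icc.mp hj).2) le_rfl).stronglyMeasurable)
    (fun j _ => hhatL2 j)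
    (hUrange (n + 2) hk) (hdef (n + 2) hk) (hata p (n + 2)) (hata p (n + 1))
  rw [hfresh, hXvar, ← mul_assoc] at hstep
  exact hstep

/-- for the random walk and its positively step-reinforced version
built from the same steps and reinforcement randomness, for every `k ≥ 2`,
`E(ΔM̂ₖ · Xₖ | ℱ_{k-1}) = âₖ (1-p) σ²`, where `M̂ₖ = âₖ Ŝₖ`. -/
theorem reinforced_predictable_covariation_with_walk
    {Ω : Type*} {mΩ : MeasurableSpace Ω} (P : Measure Ω) [IsProbabilityMeasure P]
    (ℱ : Filtration ℕ mΩ)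
    (p σ : ℝ) (hp : p ∈ Set.Ioo (0 : ℝ) 1)
    (X hatX : ℕ → Ω → ℝ) (ε : ℕ → Ω → Bool) (U : ℕ → Ω → ℕ)
    (hXL2 : ∀ k, MemLp (X k) 2 P) (hhatL2 : ∀ k, MemLp (hatX k) 2 P)
    (hXmeas : ∀ k, Measurable (X k)) (hεmeas : ∀ k, Measurable (ε k))
    (hUmeas : ∀ k, Measurable (U k))
    (hadapt : Adapted ℱ hatX)
    -- `X̂ₖ = Xₖ 1_{εₖ=0} + X̂_{U[k-1]} 1_{εₖ=1}`, with `U[k-1]` uniform on `{1,…,k-1}`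
    (hdef : ∀ k : ℕ, 2 ≤ k → ∀ ω, hatX k ω =
      if ε k ω = true then hatX (U (k - 1) ω) ω else X k ω)
    (hUrange : ∀ k : ℕ, 2 ≤ k → ∀ ω, U (k - 1) ω ∈ Finset.Icc 1 (k - 1))
    -- `(εₖ, U[k-1], Xₖ)` is independent of `ℱ_{k-1}`
    (hindep : ∀ k : ℕ, 2 ≤ k → Indep
      (MeasurableSpace.comap (fun ω => (ε k ω, U (k - 1) ω, X k ω)) inferInstance)
      (ℱ (k - 1)) P)
    -- `(εₖ, U[k-1])` is independent of `Xₖ`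
    (hindep' : ∀ k : ℕ, 2 ≤ k →
      IndepFun (fun ω => (ε k ω, U (k - 1) ω)) (X k) P)
    -- `εₖ` is Bernoulli(`p`), `U[k-1]` uniform, mutually independent
    (hlaw : ∀ k : ℕ, 2 ≤ k → ∀ j ∈ Finset.Icc 1 (k - 1),
      P {ω | ε k ω = true ∧ U (k - 1) ω = j} = ENNReal.ofReal (p / (k - 1 : ℕ)))
    (hlaw' : ∀ k : ℕ, 2 ≤ k → P {ω | ε k ω = false} = ENNReal.ofReal (1 - p))
    -- the steps are centred with variance `σ²`
    (hXcent : ∀ k, ∫ ω, X k ω ∂P = 0)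
    (hXvar : ∀ k, ∫ ω, (X k ω) ^ 2 ∂P = σ ^ 2) :
    ∀ k : ℕ, 2 ≤ k →
      P[fun ω =>
          (hata p k * ∑ j ∈ Finset.Icc 1 k, hatX j ω
            - hata p (k - 1) * ∑ j ∈ Finset.Icc 1 (k - 1), hatX j ω) * X k ω
        | ℱ (k - 1)]
        =ᵐ[P] fun _ => hata p k * (1 - p) * σ ^ 2 :=
  reinforced_predictable_covariation_with_walk_general P ℱ p σ hp X hatX ε U hXL2 hhatL2 hXmeas
    hεmeas hUmeas hadapt hdef hUrange hindep hindep' hlaw' hXcent hXvar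
end

section
/- Let $p \in (0,1)$, and let $(\hat{S}_n)$ and $(\check{S}_n)$ be the positively reinforced and counterbalanced random walks built from the same i.i.d. centred steps and the same reinforcement randomness. Then for $k \geq 2$, $\mathbb{E}(\check{X}_k\hat{X}_k \mid \mathcal{F}_{k-1}) = (1-p)\sigma^2 - \frac{p}{k-1}\sum_{j=1}^{k-1}\check{X}_j\hat{X}_j$. -/
/-!
On `{εₖ = 0}` both walks take the fresh step `Xₖ`, so `X̌ₖ X̂ₖ = Xₖ²`; on
`{εₖ = 1, U[k-1] = j}` they repeat step `j` with opposite signs, so `X̌ₖ X̂ₖ = -X̌ⱼ X̂ⱼ`.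
The first indicator is a function of `(εₖ, U[k-1], Xₖ)` alone, so its conditional
expectation is the constant `P(εₖ = 0) E[Xₖ²] = (1 - p) σ²`. In the second, `X̌ⱼ X̂ⱼ` is
`ℱ_{k-1}`-measurable and pulls out, leaving `P(εₖ = 1, U[k-1] = j) = p / (k - 1)`.
-/

open MeasureTheory ProbabilityTheory Filter Finset

section IndicatorOfIndep

variable {Ω : Type*} {m m' mΩ : MeasurableSpace Ω} {μ : Measure Ω}

lemma condExp_sub_finsetSum_ae_eq {E : Type*} [NormedAddCommGroup E] [NormedSpace ℝ E]
    [CompleteSpace E] {ι : Type*} {s : Finset ι} {f g : Ω → E} {fᵢ gᵢ : ι → Ω → E}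
    (hf : Integrable f μ) (hfᵢ : ∀ i ∈ s, Integrable (fᵢ i) μ)
    (hg : μ[f | m] =ᵐ[μ] g) (hgᵢ : ∀ i ∈ s, μ[fᵢ i | m] =ᵐ[μ] gᵢ i) :
    μ[f - ∑ i ∈ s, fᵢ i | m] =ᵐ[μ] g - ∑ i ∈ s, gᵢ i := by
  have hsum : ∑ i ∈ s, μ[fᵢ i | m] =ᵐ[μ] ∑ i ∈ s, gᵢ i := by
    filter_upwards [(eventually_all_finset s).2 hgᵢ] with ω hω
    simp only [Finset.sum_apply]
    exact Finset.sum_congr rfl hω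
  exact (condExp_sub hf (integrable_finsetSum' _ hfᵢ) m).trans
    (hg.sub ((condExp_finsetSum hfᵢ m).trans hsum))

lemma ProbabilityTheory.IndepFun.integral_indicator_of_measurableSet_comap {β : Type*}
    [mβ : MeasurableSpace β] {Y : Ω → β} {f : Ω → ℝ} (h : IndepFun Y f μ)
    (hY : Measurable Y) (hf : AEStronglyMeasurable f μ) {s : Set Ω}
    (hs : MeasurableSet[mβ.comap Y] s) :
    ∫ ω, s.indicator f ω ∂μ = μ.real s * ∫ ω, f ω ∂μ := by
  obtain ⟨S, hS, rfl⟩ := hs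
  have hind : IndepFun (S.indicator (1 : β → ℝ) ∘ Y) f μ :=
    h.comp (measurable_one.indicator hS) measurable_id
  have hsplit : (Y ⁻¹' S).indicator f = (S.indicator 1 ∘ Y) * f := by
    ext ω
    by_cases hω : Y ω ∈ S <;> simp [hω]
  rw [hsplit, hind.integral_mul_eq_mul_integral
    ((measurable_one.indicator hS).comp hY).aestronglyMeasurable hf,
    ← integral_indicator_one (hY hS)]
  rfl

variable [IsProbabilityMeasure μ]

lemma condExp_indicator_eq_const_of_indep (hm' : m' ≤ mΩ) (hm : m ≤ mΩ)
    (hind : Indep m' m μ) {β : Type*} [mβ : MeasurableSpace β] {Y : Ω → β} {f : Ω → ℝ}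
    (hY : Measurable[m'] Y) (hf : Measurable[m'] f) (hYf : IndepFun Y f μ)
    {s : Set Ω} (hs : MeasurableSet[mβ.comap Y] s) :
    μ[s.indicator f | m] =ᵐ[μ] fun _ => μ.real s * ∫ ω, f ω ∂μ := by
  rw [← hYf.integral_indicator_of_measurableSet_comap (hY.mono hm' le_rfl)
    (hf.mono hm' le_rfl).aestronglyMeasurable hs]
  exact condExp_indep_eq hm' hm (hf.stronglyMeasurable.indicator (hY.comap_le _ hs)) hind

lemma condExp_indicator_eq_measureReal_mul_of_indep (hm' : m' ≤ mΩ) (hm : m ≤ mΩ)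
    (hind : Indep m' m μ) {s : Set Ω} (hs : MeasurableSet[m'] s)
    {f : Ω → ℝ} (hf : StronglyMeasurable[m] f) (hfi : Integrable f μ) :
    μ[s.indicator f | m] =ᵐ[μ] fun ω => μ.real s * f ω := by
  have hs₀ : MeasurableSet s := hm' s hs
  have hsplit : s.indicator f = f * s.indicator 1 := by
    ext ω
    by_cases hω : ω ∈ s <;> simp [hω]
  rw [hsplit]
  filter_upwards [condExp_mul_of_stronglyMeasurable_left hf (hsplit ▸ hfi.indicator hs₀)
      ((integrable_const 1).indicator hs₀ : Integrable (s.indicator 1) μ),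
    condExp_indep_eq hm' hm ((stronglyMeasurable_one (β := ℝ)).indicator hs) hind] with ω h h'
  rw [h, Pi.mul_apply, h', integral_indicator_one hs₀, mul_comm]

end IndicatorOfIndep

lemma mul_eq_indicator_sub_sum_indicator {Ω : Type*} {b : Ω → Bool} {u : Ω → ℕ}
    {s : Finset ℕ} (hu : ∀ ω, u ω ∈ s) {x y z : Ω → ℝ} {a c : ℕ → Ω → ℝ}
    (hy : ∀ ω, y ω = if b ω = true then -a (u ω) ω else x ω)
    (hz : ∀ ω, z ω = if b ω = true then c (u ω) ω else x ω) :
    (fun ω => y ω * z ω) = {ω | b ω = false}.indicator (fun ω => x ω ^ 2)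
      - ∑ j ∈ s, {ω | b ω = true ∧ u ω = j}.indicator (fun ω => a j ω * c j ω) := by
  ext ω
  simp only [hy, hz, Pi.sub_apply, Finset.sum_apply, Set.indicator_apply, Set.mem_ofPred_eq]
  by_cases hb : b ω = true
  · simp [hb, Finset.sum_ite_eq, hu ω]
  · simp [hb, sq]

section Step

-- `(e, u, x)` stands for `(εₖ, U[k-1], Xₖ)`.
variable {Ω : Type*} {m mΩ : MeasurableSpace Ω} {μ : Measure Ω} [IsProbabilityMeasure μ]
  {e : Ω → Bool} {u : Ω → ℕ} {x : Ω → ℝ}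

lemma condExp_indicator_fresh_eq (hm : m ≤ mΩ) (he : Measurable e) (hu : Measurable u)
    (hx : Measurable x)
    (hind : Indep (MeasurableSpace.comap (fun ω => (e ω, u ω, x ω)) inferInstance) m μ)
    (hex : IndepFun (fun ω => (e ω, u ω)) x μ) :
    μ[{ω | e ω = false}.indicator (fun ω => x ω ^ 2) | m]
      =ᵐ[μ] fun _ => μ.real {ω | e ω = false} * ∫ ω, x ω ^ 2 ∂μ :=
  condExp_indicator_eq_const_of_indep (he.prodMk (hu.prodMk hx)).comap_le hm hind (Y := e)
    (f := fun ω => x ω ^ 2) (measurable_fst.comp (comap_measurable _))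
    (((measurable_snd.comp measurable_snd).comp (comap_measurable _)).pow_const 2)
    (hex.comp measurable_fst (measurable_id.pow_const 2))
    ⟨{false}, measurableSet_singleton false, rfl⟩

lemma condExp_indicator_pick_eq (hm : m ≤ mΩ) (he : Measurable e) (hu : Measurable u)
    (hx : Measurable x)
    (hind : Indep (MeasurableSpace.comap (fun ω => (e ω, u ω, x ω)) inferInstance) m μ)
    {g : Ω → ℝ} (hg : StronglyMeasurable[m] g) (hgi : Integrable g μ) (j : ℕ) :
    μ[{ω | e ω = true ∧ u ω = j}.indicator g | m]
      =ᵐ[μ] fun ω => μ.real {ω | e ω = true ∧ u ω = j} * g ω :=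
  condExp_indicator_eq_measureReal_mul_of_indep (he.prodMk (hu.prodMk hx)).comap_le hm hind
    ⟨{y | y.1 = true ∧ y.2.1 = j}, (measurable_fst (measurableSet_singleton true)).inter
      (measurable_snd.fst (measurableSet_singleton j)), rfl⟩ hg hgi

end Step

theorem cross_step_conditional_expectation_general
    {Ω : Type*} {mΩ : MeasurableSpace Ω} (P : Measure Ω) [IsProbabilityMeasure P]
    (ℱ : Filtration ℕ mΩ)
    (p σ : ℝ) (hp : p ∈ Set.Ioo (0 : ℝ) 1)
    (X hatX checkX : ℕ → Ω → ℝ) (ε : ℕ → Ω → Bool) (U : ℕ → Ω → ℕ)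
    (hXL2 : ∀ k, MemLp (X k) 2 P)
    (hhatL2 : ∀ k, MemLp (hatX k) 2 P) (hcheckL2 : ∀ k, MemLp (checkX k) 2 P)
    (hXmeas : ∀ k, Measurable (X k)) (hεmeas : ∀ k, Measurable (ε k))
    (hUmeas : ∀ k, Measurable (U k))
    (hhatadapt : Adapted ℱ hatX) (hcheckadapt : Adapted ℱ checkX)
    -- the same `εₖ` and `U[k-1]` are used for both walks
    (hhatdef : ∀ k : ℕ, 2 ≤ k → ∀ ω, hatX k ω =
      if ε k ω = true then hatX (U (k - 1) ω) ω else X k ω)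
    (hcheckdef : ∀ k : ℕ, 2 ≤ k → ∀ ω, checkX k ω =
      if ε k ω = true then -(checkX (U (k - 1) ω) ω) else X k ω)
    (hUrange : ∀ k : ℕ, 2 ≤ k → ∀ ω, U (k - 1) ω ∈ Finset.Icc 1 (k - 1))
    -- `(εₖ, U[k-1], Xₖ)` is independent of `ℱ_{k-1}`
    (hindep : ∀ k : ℕ, 2 ≤ k → Indep
      (MeasurableSpace.comap (fun ω => (ε k ω, U (k - 1) ω, X k ω)) inferInstance)
      (ℱ (k - 1)) P)
    -- `(εₖ, U[k-1])` is independent of `Xₖ`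
    (hindep' : ∀ k : ℕ, 2 ≤ k →
      IndepFun (fun ω => (ε k ω, U (k - 1) ω)) (X k) P)
    -- `εₖ` is Bernoulli(`p`), `U[k-1]` uniform, mutually independent
    (hlaw : ∀ k : ℕ, 2 ≤ k → ∀ j ∈ Finset.Icc 1 (k - 1),
      P {ω | ε k ω = true ∧ U (k - 1) ω = j} = ENNReal.ofReal (p / (k - 1 : ℕ)))
    (hlaw' : ∀ k : ℕ, 2 ≤ k → P {ω | ε k ω = false} = ENNReal.ofReal (1 - p))
    (hXvar : ∀ k, ∫ ω, (X k ω) ^ 2 ∂P = σ ^ 2) :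
    ∀ k : ℕ, 2 ≤ k →
      P[fun ω => checkX k ω * hatX k ω | ℱ (k - 1)]
        =ᵐ[P] fun ω =>
          (1 - p) * σ ^ 2
            - (p / ((k : ℝ) - 1)) * ∑ j ∈ Finset.Icc 1 (k - 1), checkX j ω * hatX j ω := by
  intro k hk
  have hsplit := mul_eq_indicator_sub_sum_indicator (a := checkX) (c := hatX) (hUrange k hk)
    (hcheckdef k hk) (hhatdef k hk)
  have hfresh := condExp_indicator_fresh_eq (ℱ.le _) (hεmeas k) (hUmeas _) (hXmeas k)
    (hindep k hk) (hindep' k hk)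
  rw [measureReal_def, hlaw' k hk, hXvar, ENNReal.toReal_ofReal (by linarith [hp.2])] at hfresh
  have hpick : ∀ j ∈ Icc 1 (k - 1),
      P[{ω | ε k ω = true ∧ U (k - 1) ω = j}.indicator (fun ω => checkX j ω * hatX j ω)
        | ℱ (k - 1)] =ᵐ[P] fun ω => p / ((k : ℝ) - 1) * (checkX j ω * hatX j ω) := by
    intro j hj
    have hjk := ℱ.mono (mem_Icc.1 hj).2
    have h := condExp_indicator_pick_eq (ℱ.le _) (hεmeas k) (hUmeas _) (hXmeas k) (hindep k hk)
      (((hcheckadapt j).mono hjk le_rfl).mul ((hhatadapt j).mono hjk le_rfl)).stronglyMeasurable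
      ((hcheckL2 j).integrable_mul (hhatL2 j)) j
    rwa [measureReal_def, hlaw k hk j hj, ENNReal.toReal_ofReal (by positivity [hp.1.le]),
      Nat.cast_sub (by omega), Nat.cast_one] at h
  rw [hsplit]
  refine (condExp_sub_finsetSum_ae_eq
    ((hXL2 k).integrable_sq.indicator (hεmeas k (measurableSet_singleton false)))
    (fun j _ => ((hcheckL2 j).integrable_mul (hhatL2 j)).indicator
      ((hεmeas k (measurableSet_singleton true)).inter (hUmeas _ (measurableSet_singleton j))))
    hfresh hpick).trans (.of_eq ?_)
  ext ω
  simp [Finset.mul_sum]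

/-- for the positively reinforced and counterbalanced random walks
built from the same i.i.d. centred steps and reinforcement randomness, for
`k ≥ 2`,
`E(X̌ₖ X̂ₖ | ℱ_{k-1}) = (1-p)σ² - (p/(k-1)) ∑_{j=1}^{k-1} X̌ⱼ X̂ⱼ`. -/
theorem cross_step_conditional_expectation
    {Ω : Type*} {mΩ : MeasurableSpace Ω} (P : Measure Ω) [IsProbabilityMeasure P]
    (ℱ : Filtration ℕ mΩ)
    (p σ : ℝ) (hp : p ∈ Set.Ioo (0 : ℝ) 1)
    (X hatX checkX : ℕ → Ω → ℝ) (ε : ℕ → Ω → Bool) (U : ℕ → Ω → ℕ)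
    (hXL2 : ∀ k, MemLp (X k) 2 P)
    (hhatL2 : ∀ k, MemLp (hatX k) 2 P) (hcheckL2 : ∀ k, MemLp (checkX k) 2 P)
    (hXmeas : ∀ k, Measurable (X k)) (hεmeas : ∀ k, Measurable (ε k))
    (hUmeas : ∀ k, Measurable (U k))
    (hhatadapt : Adapted ℱ hatX) (hcheckadapt : Adapted ℱ checkX)
    -- the same `εₖ` and `U[k-1]` are used for both walks
    (hhatdef : ∀ k : ℕ, 2 ≤ k → ∀ ω, hatX k ω =
      if ε k ω = true then hatX (U (k - 1) ω) ω else X k ω)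
    (hcheckdef : ∀ k : ℕ, 2 ≤ k → ∀ ω, checkX k ω =
      if ε k ω = true then -(checkX (U (k - 1) ω) ω) else X k ω)
    (hUrange : ∀ k : ℕ, 2 ≤ k → ∀ ω, U (k - 1) ω ∈ Finset.Icc 1 (k - 1))
    -- `(εₖ, U[k-1], Xₖ)` is independent of `ℱ_{k-1}`
    (hindep : ∀ k : ℕ, 2 ≤ k → Indep
      (MeasurableSpace.comap (fun ω => (ε k ω, U (k - 1) ω, X k ω)) inferInstance)
      (ℱ (k - 1)) P)
    -- `(εₖ, U[k-1])` is independent of `Xₖ`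
    (hindep' : ∀ k : ℕ, 2 ≤ k →
      IndepFun (fun ω => (ε k ω, U (k - 1) ω)) (X k) P)
    -- `εₖ` is Bernoulli(`p`), `U[k-1]` uniform, mutually independent
    (hlaw : ∀ k : ℕ, 2 ≤ k → ∀ j ∈ Finset.Icc 1 (k - 1),
      P {ω | ε k ω = true ∧ U (k - 1) ω = j} = ENNReal.ofReal (p / (k - 1 : ℕ)))
    (hlaw' : ∀ k : ℕ, 2 ≤ k → P {ω | ε k ω = false} = ENNReal.ofReal (1 - p))
    -- the steps are centred with variance `σ²`
    (hXcent : ∀ k, ∫ ω, X k ω ∂P = 0)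
    (hXvar : ∀ k, ∫ ω, (X k ω) ^ 2 ∂P = σ ^ 2) :
    ∀ k : ℕ, 2 ≤ k →
      P[fun ω => checkX k ω * hatX k ω | ℱ (k - 1)]
        =ᵐ[P] fun ω =>
          (1 - p) * σ ^ 2
            - (p / ((k : ℝ) - 1)) * ∑ j ∈ Finset.Icc 1 (k - 1), checkX j ω * hatX j ω :=
  cross_step_conditional_expectation_general P ℱ p σ hp X hatX checkX ε U hXL2 hhatL2 hcheckL2
    hXmeas hεmeas hUmeas hhatadapt hcheckadapt hhatdef hcheckdef hUrange hindep hindep' hlaw hlaw'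
    hXvar
end
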